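/- arXiv:math/0602023 — 7 statements merged into one kernel-verified Lean document; each statement's English description precedes it below -/
import Mathlib

section
/- Let A, B, C ∈ SL₂(ℂ) be matrices satisfying tr A = 2 cos α, tr B = 2 cos β, and tr C = 2 cos γ for some real numbers α, β, γ ∈ (0, π). Then there exists a matrix P ∈ SL₂(ℂ) such that tr(A P B P⁻¹) = tr C. -/
abbrev SL2C := Matrix.SpecialLinearGroup (Fin 2) ℂ

open Matrix Complex

noncomputable def diagSL (a : ℂ) (ha : a ≠ 0) : SL2C :=
  ⟨!![a, 0; 0, a⁻¹], by simp [Matrix.det_fin_two_of, mul_inv_cancel₀ ha]⟩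

lemma exists_conj_of_aux (M : SL2C) (a : ℂ) (ha : a ≠ 0)
    (N : Matrix (Fin 2) (Fin 2) ℂ) (hN : N.det ≠ 0)
    (h : (M : Matrix (Fin 2) (Fin 2) ℂ) * N = N * (diagSL a ha : Matrix (Fin 2) (Fin 2) ℂ)) :
    ∃ Q : SL2C, M = Q * diagSL a ha * Q⁻¹ := by
  obtain ⟨s, hs⟩ := IsAlgClosed.exists_pow_nat_eq (k := ℂ) N.det⁻¹ (n := 2) (by norm_num)
  have hdetQ : (s • N).det = 1 := by
    rw [Matrix.det_smul]; simp only [Fintype.card_fin]; rw [hs]; exact inv_mul_cancel₀ hN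
  let Q : SL2C := ⟨s • N, hdetQ⟩
  refine ⟨Q, ?_⟩
  have hMQ : M * Q = Q * diagSL a ha := by
    apply Subtype.ext
    simp only [Matrix.SpecialLinearGroup.coe_mul]
    show (M : Matrix (Fin 2) (Fin 2) ℂ) * (s • N) = (s • N) * _
    rw [Matrix.mul_smul, Matrix.smul_mul, h]
  calc M = M * Q * Q⁻¹ := by group
    _ = Q * diagSL a ha * Q⁻¹ := by rw [hMQ]

lemma exists_conj (M : SL2C) (a : ℂ) (ha : a ≠ 0) (hne : a ≠ a⁻¹)
    (htr : (M : Matrix (Fin 2) (Fin 2) ℂ).trace = a + a⁻¹) :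
    ∃ Q : SL2C, M = Q * diagSL a ha * Q⁻¹ := by
  set m := (M : Matrix (Fin 2) (Fin 2) ℂ) 0 0 with hm
  set n := (M : Matrix (Fin 2) (Fin 2) ℂ) 0 1 with hn
  set p := (M : Matrix (Fin 2) (Fin 2) ℂ) 1 0 with hp
  set q := (M : Matrix (Fin 2) (Fin 2) ℂ) 1 1 with hq
  have hME : (M : Matrix (Fin 2) (Fin 2) ℂ) = !![m, n; p, q] := by
    ext i j; fin_cases i <;> fin_cases j <;> rfl
  have hdet : m * q - n * p = 1 := by
    have := M.2
    rwa [Matrix.det_fin_two] at this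
  have ht : m + q = a + a⁻¹ := by
    rwa [Matrix.trace_fin_two] at htr
  have hau : a * a⁻¹ = 1 := mul_inv_cancel₀ ha
  have hsub : a - a⁻¹ ≠ 0 := sub_ne_zero.mpr hne
  have hDco : (diagSL a ha : Matrix (Fin 2) (Fin 2) ℂ) = !![a, 0; 0, a⁻¹] := rfl
  by_cases hn0 : n = 0
  · have hfac : (m - a) * (m - a⁻¹) = 0 := by
      linear_combination m * ht - hdet + hau - p * hn0
    rcases mul_eq_zero.mp hfac with hma | hmu
    · -- m = a, q = a⁻¹
      have hma' : m = a := sub_eq_zero.mp hma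
      have hq' : q = a⁻¹ := by linear_combination ht - hma'
      apply exists_conj_of_aux M a ha !![m - q, 0; p, 1]
      · rw [Matrix.det_fin_two_of]
        intro hc
        rw [hma', hq'] at hc
        exact hsub (by linear_combination hc)
      · rw [hME, hDco]
        ext i j
        fin_cases i <;> fin_cases j <;>
          simp [Matrix.mul_apply, Fin.sum_univ_two, hn0] <;> ring_nf
        · linear_combination (m - q) * hma'
        · linear_combination p * hma'
        · linear_combination hq'
    · -- m = a⁻¹, q = a
      have hma' : m = a⁻¹ := sub_eq_zero.mp hmu
      have hq' : q = a := by linear_combination ht - hma'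
      apply exists_conj_of_aux M a ha !![0, m - q; 1, p]
      · rw [Matrix.det_fin_two_of]
        intro hc
        rw [hma', hq'] at hc
        exact hsub (by linear_combination hc)
      · rw [hME, hDco]
        ext i j
        fin_cases i <;> fin_cases j <;>
          simp [Matrix.mul_apply, Fin.sum_univ_two, hn0]
        · linear_combination (m - q) * hma'
        · linear_combination hq'
        · linear_combination p * hma'
  · apply exists_conj_of_aux M a ha !![n, n; a - m, a⁻¹ - m]
    · rw [Matrix.det_fin_two_of]
      intro hc
      apply hn0
      have h2 : n * (a⁻¹ - a) = 0 := by linear_combination hc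
      rcases mul_eq_zero.mp h2 with h | h
      · exact h
      · exact absurd (by linear_combination -h) hsub
    · rw [hME, hDco]
      ext i j
      fin_cases i <;> fin_cases j <;>
        simp [Matrix.mul_apply, Fin.sum_univ_two] <;> ring_nf
      · linear_combination -hdet + a * ht + hau
      · linear_combination -hdet + a⁻¹ * ht + hau

/-- If `A B C ∈ SL₂(ℂ)` have traces `2 cos α`, `2 cos β`, `2 cos γ` with
`α, β, γ ∈ (0, π)`, then there is `P ∈ SL₂(ℂ)` with `tr (A P B P⁻¹) = tr C`. -/
theorem trace_conj_exists (A B C : SL2C) (α β γ : ℝ)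
    (hα : α ∈ Set.Ioo (0 : ℝ) Real.pi) (hβ : β ∈ Set.Ioo (0 : ℝ) Real.pi)
    (hγ : γ ∈ Set.Ioo (0 : ℝ) Real.pi)
    (hA : Matrix.trace (A : Matrix (Fin 2) (Fin 2) ℂ) = ((2 * Real.cos α : ℝ) : ℂ))
    (hB : Matrix.trace (B : Matrix (Fin 2) (Fin 2) ℂ) = ((2 * Real.cos β : ℝ) : ℂ))
    (hC : Matrix.trace (C : Matrix (Fin 2) (Fin 2) ℂ) = ((2 * Real.cos γ : ℝ) : ℂ)) :
    ∃ P : SL2C,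
      Matrix.trace ((A * P * B * P⁻¹ : SL2C) : Matrix (Fin 2) (Fin 2) ℂ) =
        Matrix.trace (C : Matrix (Fin 2) (Fin 2) ℂ) := by
  set a : ℂ := Complex.exp (α * Complex.I) with ha_def
  set b : ℂ := Complex.exp (β * Complex.I) with hb_def
  have ha0 : a ≠ 0 := Complex.exp_ne_zero _
  have hb0 : b ≠ 0 := Complex.exp_ne_zero _
  have hsin : ∀ θ : ℝ, θ ∈ Set.Ioo (0:ℝ) Real.pi →
      Complex.exp (θ * Complex.I) ≠ (Complex.exp (θ * Complex.I))⁻¹ := by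
    intro θ hθ hcontra
    have him : (Complex.exp (θ * Complex.I)).im = Real.sin θ :=
      Complex.exp_ofReal_mul_I_im θ
    have hpos : 0 < Real.sin θ := Real.sin_pos_of_pos_of_lt_pi hθ.1 hθ.2
    have hsq : Complex.exp (θ * Complex.I) * Complex.exp (θ * Complex.I) = 1 := by
      calc Complex.exp (θ * Complex.I) * Complex.exp (θ * Complex.I)
          = Complex.exp (θ * Complex.I) * (Complex.exp (θ * Complex.I))⁻¹ := by
            rw [← hcontra]
        _ = 1 := mul_inv_cancel₀ (Complex.exp_ne_zero _)
    rcases mul_self_eq_one_iff.mp hsq with h1 | h1 <;>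
      rw [h1] at him <;> simp at him <;> linarith
  have hnea : a ≠ a⁻¹ := hsin α hα
  have hneb : b ≠ b⁻¹ := hsin β hβ
  have hcosconv : ∀ θ : ℝ, ((2 * Real.cos θ : ℝ) : ℂ) =
      Complex.exp (θ * Complex.I) + (Complex.exp (θ * Complex.I))⁻¹ := by
    intro θ
    have h2 : (Complex.exp ((θ:ℂ) * Complex.I))⁻¹ = Complex.exp (-(θ:ℂ) * Complex.I) := by
      rw [neg_mul, Complex.exp_neg]
    rw [h2]
    rw [← Complex.two_cos]
    push_cast
    ring
  have htrA : (A : Matrix (Fin 2) (Fin 2) ℂ).trace = a + a⁻¹ := by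
    rw [hA, ha_def]; exact hcosconv α
  have htrB : (B : Matrix (Fin 2) (Fin 2) ℂ).trace = b + b⁻¹ := by
    rw [hB, hb_def]; exact hcosconv β
  obtain ⟨Q, hQ⟩ := exists_conj A a ha0 hnea htrA
  obtain ⟨R, hR⟩ := exists_conj B b hb0 hneb htrB
  set τ : ℂ := ((2 * Real.cos γ : ℝ) : ℂ) with hτ
  set t : ℂ := b + b⁻¹ with htb
  set x : ℂ := (τ - a⁻¹ * t) / (a - a⁻¹) with hx
  have hsuba : a - a⁻¹ ≠ 0 := sub_ne_zero.mpr hnea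
  have hM0det : (!![x, x * (t - x) - 1; 1, t - x] : Matrix (Fin 2) (Fin 2) ℂ).det = 1 := by
    rw [Matrix.det_fin_two_of]; ring
  set M0 : SL2C := ⟨!![x, x * (t - x) - 1; 1, t - x], hM0det⟩ with hM0
  have htrM0 : (M0 : Matrix (Fin 2) (Fin 2) ℂ).trace = b + b⁻¹ := by
    rw [Matrix.trace_fin_two]
    show x + (t - x) = b + b⁻¹
    rw [htb]; ring
  obtain ⟨S, hS⟩ := exists_conj M0 b hb0 hneb htrM0
  refine ⟨Q * S * R⁻¹, ?_⟩
  have hkey : A * (Q * S * R⁻¹) * B * (Q * S * R⁻¹)⁻¹ = Q * (diagSL a ha0 * M0) * Q⁻¹ := by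
    rw [hQ, hR, hS]; group
  rw [hkey, hC]
  have hconj : ∀ X Y : SL2C, ((Y * X * Y⁻¹ : SL2C) : Matrix (Fin 2) (Fin 2) ℂ).trace
      = ((X : SL2C) : Matrix (Fin 2) (Fin 2) ℂ).trace := by
    intro X Y
    rw [Matrix.SpecialLinearGroup.coe_mul, Matrix.trace_mul_comm,
      ← Matrix.SpecialLinearGroup.coe_mul, inv_mul_cancel_left]
  rw [hconj]
  have hco : ((diagSL a ha0 * M0 : SL2C) : Matrix (Fin 2) (Fin 2) ℂ)
      = !![a, 0; 0, a⁻¹] * !![x, x * (t - x) - 1; 1, t - x] := by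
    simp only [Matrix.SpecialLinearGroup.coe_mul]; rfl
  rw [hco, Matrix.mul_fin_two, Matrix.trace_fin_two_of]
  show a * x + 0 * 1 + (0 * (x * (t - x) - 1) + a⁻¹ * (t - x)) = τ
  have hxx : (a - a⁻¹) * x = τ - a⁻¹ * t := by
    rw [hx, mul_div_cancel₀ _ hsuba]
  linear_combination hxx
end

section
/- For every element w of the free group on two generators, there exists a polynomial P ∈ ℤ[X, Y, Z] in three variables with integer coefficients such that for all A, B ∈ SL₂(ℂ), the trace of the evaluation of w at (A, B) equals P(tr A, tr B, tr(AB)). -/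
namespace FrickeAux

abbrev M2 := Matrix (Fin 2) (Fin 2) ℂ


lemma adj_eq (a : M2) : a.adjugate = a.trace • 1 - a := by
  rw [Matrix.adjugate_fin_two]
  ext i j
  fin_cases i <;> fin_cases j <;> simp [Matrix.trace_fin_two, Matrix.one_apply]

lemma mul_self_eq (a : M2) (ha : a.det = 1) : a * a = a.trace • a - 1 := by
  have h := Matrix.mul_adjugate a
  rw [adj_eq, ha, one_smul, mul_sub, mul_smul_comm, mul_one, sub_eq_iff_eq_add] at h
  rw [h]
  abel

lemma mul_rev (a b : M2) : b * a =
    b.trace • a + a.trace • b - a * b + ((a*b).trace - a.trace * b.trace) • (1:M2) := by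
  ext i j
  fin_cases i <;> fin_cases j <;>
    simp [Matrix.mul_apply, Fin.sum_univ_two, Matrix.trace_fin_two, Matrix.one_apply] <;>
    ring

lemma inv_coe (A : SL2C) : ((A⁻¹ : SL2C) : M2) = (A : M2).trace • 1 - (A : M2) := by
  rw [Matrix.SpecialLinearGroup.coe_inv, Matrix.adjugate_fin_two]
  ext i j
  fin_cases i <;> fin_cases j <;>
    simp [Matrix.trace_fin_two, Matrix.one_apply]

lemma ab_mul_a (a b : M2) (ha : a.det = 1) :
    (a*b)*a = (a*b).trace • a + b - b.trace • (1:M2) := by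
  rw [mul_assoc, mul_rev a b]
  simp only [mul_add, mul_sub, mul_smul_comm, mul_one]
  rw [← mul_assoc, mul_self_eq a ha, sub_mul, smul_mul_assoc, one_mul]
  module

lemma ab_mul_b (a b : M2) (hb : b.det = 1) :
    (a*b)*b = b.trace • (a*b) - a := by
  rw [mul_assoc, mul_self_eq b hb, mul_sub, mul_smul_comm, mul_one]

lemma keyA (a b : M2) (ha : a.det = 1) (α β γ δ : ℂ) :
    (α•(1:M2) + β•a + γ•b + δ•(a*b)) * a =
      (-β + γ*((a*b).trace - a.trace*b.trace) - δ*b.trace)•(1:M2)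
      + (α + β*a.trace + γ*b.trace + δ*(a*b).trace)•a + (γ*a.trace + δ)•b
      + (-γ)•(a*b) := by
  simp only [add_mul, smul_mul_assoc, one_mul]
  rw [mul_self_eq a ha, mul_rev a b, ab_mul_a a b ha]
  module

lemma keyB (a b : M2) (hb : b.det = 1) (α β γ δ : ℂ) :
    (α•(1:M2) + β•a + γ•b + δ•(a*b)) * b =
      (-γ)•(1:M2) + (-δ)•a + (α + γ*b.trace)•b + (β + δ*b.trace)•(a*b) := by
  simp only [add_mul, smul_mul_assoc, one_mul]
  rw [mul_self_eq b hb, ab_mul_b a b hb]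
  module

lemma key_mul (a b : M2) (ha : a.det = 1) (hb : b.det = 1) (α β γ δ α' β' γ' δ' : ℂ) :
    (α•(1:M2) + β•a + γ•b + δ•(a*b)) * (α'•(1:M2) + β'•a + γ'•b + δ'•(a*b)) =
      (α'*α + β'*(-β + γ*((a*b).trace - a.trace*b.trace) - δ*b.trace) + γ'*(-γ)
          + δ'*(-(γ*a.trace) - δ))•(1:M2)
      + (α'*β + β'*(α + β*a.trace + γ*b.trace + δ*(a*b).trace) + γ'*(-δ) + δ'*γ)•a
      + (α'*γ + β'*(γ*a.trace + δ) + γ'*(α + γ*b.trace) + δ'*(-β + γ*(a*b).trace))•b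
      + (α'*δ + β'*(-γ) + γ'*(β + δ*b.trace)
          + δ'*(α + β*a.trace + δ*(a*b).trace))•(a*b) := by
  rw [mul_add, mul_add, mul_add, mul_smul_comm, mul_smul_comm, mul_smul_comm,
    mul_smul_comm, mul_one, ← mul_assoc]
  rw [keyA a b ha, keyB a b hb, keyB a b hb]
  module

open MvPolynomial in
noncomputable def ev (A B : SL2C) (P : MvPolynomial (Fin 3) ℤ) : ℂ :=
  MvPolynomial.aeval
    ![Matrix.trace (A : M2), Matrix.trace (B : M2), Matrix.trace ((A*B : SL2C) : M2)] P

lemma main (w : FreeGroup (Fin 2)) :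
    ∃ p q r s : MvPolynomial (Fin 3) ℤ, ∀ A B : SL2C,
      ((FreeGroup.lift ![A, B] w : SL2C) : M2) =
        ev A B p • (1:M2) + ev A B q • (A : M2) + ev A B r • (B : M2)
          + ev A B s • ((A : M2) * (B : M2)) := by
  induction w using FreeGroup.induction_on with
  | C1 =>
    exact ⟨1, 0, 0, 0, fun A B => by simp [ev]⟩
  | of i =>
    have hp : ∀ j : Fin 2, (pure j : FreeGroup (Fin 2)) = FreeGroup.of j := fun _ => rfl
    fin_cases i
    · exact ⟨0, 1, 0, 0, fun A B => by simp [ev, hp, FreeGroup.lift_apply_of]⟩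
    · exact ⟨0, 0, 1, 0, fun A B => by simp [ev, hp, FreeGroup.lift_apply_of]⟩
  | inv_of i _ =>
    have hp : ∀ j : Fin 2, (pure j : FreeGroup (Fin 2)) = FreeGroup.of j := fun _ => rfl
    fin_cases i
    · refine ⟨MvPolynomial.X 0, -1, 0, 0, fun A B => by
        simp only [map_inv, hp, FreeGroup.lift_apply_of, Matrix.cons_val_zero]
        rw [inv_coe]
        simp [ev]
        module⟩
    · refine ⟨MvPolynomial.X 1, 0, -1, 0, fun A B => by
        simp only [map_inv, hp, FreeGroup.lift_apply_of, Matrix.cons_val_one, Matrix.head_cons]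
        rw [inv_coe]
        simp [ev]
        module⟩
  | mul u v hu hv =>
    obtain ⟨p, q, r, s, hu⟩ := hu
    obtain ⟨p', q', r', s', hv⟩ := hv
    set X : MvPolynomial (Fin 3) ℤ := MvPolynomial.X 0
    set Y : MvPolynomial (Fin 3) ℤ := MvPolynomial.X 1
    set Z : MvPolynomial (Fin 3) ℤ := MvPolynomial.X 2
    refine ⟨p'*p + q'*(-q + r*(Z - X*Y) - s*Y) + r'*(-r) + s'*(-(r*X) - s),
            p'*q + q'*(p + q*X + r*Y + s*Z) + r'*(-s) + s'*r,
            p'*r + q'*(r*X + s) + r'*(p + r*Y) + s'*(-q + r*Z),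
            p'*s + q'*(-r) + r'*(q + s*Y) + s'*(p + q*X + s*Z), fun A B => ?_⟩
    have hx : ev A B X = Matrix.trace (A : M2) := by simp [ev, X]
    have hy : ev A B Y = Matrix.trace (B : M2) := by simp [ev, Y]
    have hz : ev A B Z = Matrix.trace ((A : M2) * (B : M2)) := by simp [ev, Z]
    rw [_root_.map_mul, Matrix.SpecialLinearGroup.coe_mul, hu A B, hv A B,
      key_mul _ _ (Matrix.SpecialLinearGroup.det_coe A) (Matrix.SpecialLinearGroup.det_coe B)]
    simp only [ev, map_add, _root_.map_mul, map_sub, map_neg,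
      Matrix.SpecialLinearGroup.coe_mul] at *
    simp only [hx, hy, hz]

end FrickeAux

/-- For every word `w` in the free group on two generators there is an integer
polynomial `P` in three variables such that for all `A, B ∈ SL₂(ℂ)`,
`tr (w(A,B)) = P(tr A, tr B, tr (A*B))`. -/
theorem trace_word_polynomial (w : FreeGroup (Fin 2)) :
    ∃ P : MvPolynomial (Fin 3) ℤ,
      ∀ A B : SL2C,
        Matrix.trace ((FreeGroup.lift ![A, B] w : SL2C) : Matrix (Fin 2) (Fin 2) ℂ) =
          MvPolynomial.aeval
            ![Matrix.trace (A : Matrix (Fin 2) (Fin 2) ℂ),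
              Matrix.trace (B : Matrix (Fin 2) (Fin 2) ℂ),
              Matrix.trace ((A * B : SL2C) : Matrix (Fin 2) (Fin 2) ℂ)] P := by
  obtain ⟨p, q, r, s, h⟩ := FrickeAux.main w
  refine ⟨MvPolynomial.C 2 * p + MvPolynomial.X 0 * q + MvPolynomial.X 1 * r
    + MvPolynomial.X 2 * s, fun A B => ?_⟩
  rw [h A B]
  simp only [FrickeAux.ev, Matrix.trace_add, Matrix.trace_smul, Matrix.trace_one,
    map_add, _root_.map_mul, MvPolynomial.aeval_C, MvPolynomial.aeval_X,
    Matrix.cons_val_zero, Matrix.cons_val_one, Matrix.head_cons,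
    Matrix.SpecialLinearGroup.coe_mul, smul_eq_mul]
  push_cast
  simp
  ring
end

section
/- Let G be a group generated by two elements g₁ and g₂, and let φ₁, φ₂ : G → SL₂(ℂ) be irreducible representations such that tr φ₁(g₁) = tr φ₂(g₁), tr φ₁(g₂) = tr φ₂(g₂), and tr φ₁(g₁g₂) = tr φ₂(g₁g₂). Then φ₁ and φ₂ are conjugate, i.e., there exists P ∈ SL₂(ℂ) with φ₂(g) = P φ₁(g) P⁻¹ for all g ∈ G. -/
/-- A representation `ρ : G → SL₂(ℂ)` is irreducible if the matrices `ρ g` have no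
common eigenvector, i.e. there is no one-dimensional invariant subspace of `ℂ²`. -/
def IsIrreducibleRep {G : Type} [Group G] (ρ : G →* SL2C) : Prop :=
  ¬ ∃ v : Fin 2 → ℂ, v ≠ 0 ∧ ∀ g : G, ∃ c : ℂ,
    Matrix.mulVec (ρ g : Matrix (Fin 2) (Fin 2) ℂ) v = c • v

namespace TraceConjAux

abbrev Mat2 := Matrix (Fin 2) (Fin 2) ℂ

/-- Polarized Cayley–Hamilton identity for 2×2 matrices. -/
lemma polarized_CH (A B : Mat2) :
    A * B + B * A = B.trace • A + A.trace • B +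
      ((A * B).trace - A.trace * B.trace) • (1 : Mat2) := by
  ext i j
  fin_cases i <;> fin_cases j <;>
    simp [Matrix.mul_apply, Matrix.trace_fin_two, Fin.sum_univ_two, Matrix.one_apply] <;>
    ring

/-- Cayley–Hamilton for 2×2 matrices. -/
lemma CH2 (B : Mat2) : B * B = B.trace • B - B.det • (1 : Mat2) := by
  ext i j
  fin_cases i <;> fin_cases j <;>
    simp [Matrix.mul_apply, Matrix.trace_fin_two, Matrix.det_fin_two, Fin.sum_univ_two,
      Matrix.one_apply] <;>
    ring

/-- Linear dependence from a vanishing 2×2 determinant. -/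
lemma dep_of_det_eq_zero (v w : Fin 2 → ℂ) (hv : v ≠ 0)
    (h : v 0 * w 1 - w 0 * v 1 = 0) : ∃ c : ℂ, w = c • v := by
  by_cases h0 : v 0 ≠ 0
  · refine ⟨w 0 / v 0, ?_⟩
    funext i
    fin_cases i
    · show w 0 = w 0 / v 0 * v 0
      exact (div_mul_cancel₀ _ h0).symm
    · show w 1 = w 0 / v 0 * v 1
      rw [div_mul_eq_mul_div, eq_div_iff h0]
      linear_combination h
  · push_neg at h0
    by_cases h1 : v 1 ≠ 0
    · refine ⟨w 1 / v 1, ?_⟩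
      funext i
      fin_cases i
      · show w 0 = w 1 / v 1 * v 0
        rw [h0, mul_zero]
        have hw : w 0 * v 1 = 0 := by linear_combination -h + w 1 * h0
        exact (mul_eq_zero.1 hw).resolve_right h1
      · show w 1 = w 1 / v 1 * v 1
        exact (div_mul_cancel₀ _ h1).symm
    · push_neg at h1
      refine absurd (funext fun i => ?_) hv
      fin_cases i
      · exact h0
      · exact h1

/-- If `v` is a common eigenvector of `φ g₁` and `φ g₂` then `φ` is reducible. -/
lemma no_common_eigenvector {G : Type} [Group G] (g₁ g₂ : G)
    (hgen : Subgroup.closure ({g₁, g₂} : Set G) = ⊤)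
    (φ : G →* SL2C) (h : IsIrreducibleRep φ) (v : Fin 2 → ℂ) (hv : v ≠ 0)
    (c₁ c₂ : ℂ)
    (e₁ : Matrix.mulVec (φ g₁ : Mat2) v = c₁ • v)
    (e₂ : Matrix.mulVec (φ g₂ : Mat2) v = c₂ • v) : False := by
  apply h
  refine ⟨v, hv, ?_⟩
  set S : Subgroup G :=
    { carrier := {g | ∃ c : ℂ, Matrix.mulVec (φ g : Mat2) v = c • v}
      one_mem' := ⟨1, by simp⟩
      mul_mem' := by
        rintro a b ⟨c, hc⟩ ⟨d, hd⟩
        refine ⟨c * d, ?_⟩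
        rw [_root_.map_mul, Matrix.SpecialLinearGroup.coe_mul, ← Matrix.mulVec_mulVec, hd,
          Matrix.mulVec_smul, hc, smul_smul, mul_comm]
      inv_mem' := by
        rintro a ⟨c, hc⟩
        have hinv : Matrix.mulVec (φ a⁻¹ : Mat2) (Matrix.mulVec (φ a : Mat2) v) = v := by
          rw [Matrix.mulVec_mulVec, ← Matrix.SpecialLinearGroup.coe_mul, ← _root_.map_mul,
            inv_mul_cancel, _root_.map_one]
          simp
        have hc0 : c ≠ 0 := by
          rintro rfl
          apply hv
          rw [hc] at hinv
          simpa using hinv.symm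
        refine ⟨c⁻¹, ?_⟩
        rw [hc, Matrix.mulVec_smul] at hinv
        exact ((inv_smul_eq_iff₀ hc0).2 hinv.symm).symm } with hS
  intro g
  have hle : Subgroup.closure ({g₁, g₂} : Set G) ≤ S := by
    rw [Subgroup.closure_le]
    rintro x (rfl | rfl)
    · exact ⟨c₁, e₁⟩
    · exact ⟨c₂, e₂⟩
  rw [hgen] at hle
  exact hle (Subgroup.mem_top g)

/-- A 2×2 complex matrix of determinant 1 has an eigenvector for every root of
its characteristic polynomial. -/
lemma exists_eigenvector (A : Mat2) (hA : A.det = 1) (lam : ℂ)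
    (hlam : lam * lam - A.trace * lam + 1 = 0) :
    ∃ v : Fin 2 → ℂ, v ≠ 0 ∧ A.mulVec v = lam • v := by
  have hdet : (A - lam • (1 : Mat2)).det = 0 := by
    rw [Matrix.det_fin_two] at hA ⊢
    rw [Matrix.trace_fin_two] at hlam
    simp only [Matrix.sub_apply, Matrix.smul_apply, Matrix.one_apply, smul_eq_mul]
    norm_num
    linear_combination hA + hlam
  obtain ⟨v, hv, hmul⟩ := Matrix.exists_mulVec_eq_zero_iff.2 hdet
  refine ⟨v, hv, ?_⟩
  rw [Matrix.sub_mulVec, Matrix.smul_mulVec, Matrix.one_mulVec, sub_eq_zero] at hmul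
  exact hmul

/-- Matrix with columns `v` and `w`. -/
def colMat (v w : Fin 2 → ℂ) : Mat2 := Matrix.of ![![v 0, w 0], ![v 1, w 1]]

/-- The normal form of a pair `(A, B)` relative to the basis `(v, Bv)` where `v`
is a `lam`-eigenvector of `A`. -/
lemma key (A B : Mat2) (hB : B.det = 1) (lam : ℂ) (v : Fin 2 → ℂ)
    (heig : A.mulVec v = lam • v) :
    A * colMat v (B.mulVec v) =
      colMat v (B.mulVec v) *
        Matrix.of ![![lam, (A * B).trace - (A.trace - lam) * B.trace],
          ![0, A.trace - lam]] ∧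
    B * colMat v (B.mulVec v) =
      colMat v (B.mulVec v) * Matrix.of ![![0, -1], ![1, B.trace]] := by
  have hv1 : (A * B).mulVec v = ((A * B).trace - (A.trace - lam) * B.trace) • v
      + (A.trace - lam) • B.mulVec v := by
    set z := (A * B).trace with hz
    have hBA : (B * A).mulVec v = lam • B.mulVec v := by
      rw [← Matrix.mulVec_mulVec, heig, Matrix.mulVec_smul]
    have hAB : A * B = B.trace • A + A.trace • B
        + (z - A.trace * B.trace) • (1 : Mat2) - B * A :=
      eq_sub_of_add_eq (polarized_CH A B)
    rw [hAB, Matrix.sub_mulVec, Matrix.add_mulVec, Matrix.add_mulVec,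
      Matrix.smul_mulVec, Matrix.smul_mulVec, Matrix.smul_mulVec,
      Matrix.one_mulVec, heig, hBA]
    module
  have hv2 : (B * B).mulVec v = (-1 : ℂ) • v + B.trace • B.mulVec v := by
    rw [CH2 B, hB, Matrix.sub_mulVec, Matrix.smul_mulVec, Matrix.smul_mulVec,
      Matrix.one_mulVec]
    module
  have e0 := congrFun heig 0
  have e1 := congrFun heig 1
  have f0 := congrFun hv1 0
  have f1 := congrFun hv1 1
  have g0 := congrFun hv2 0
  have g1 := congrFun hv2 1
  simp only [Matrix.mulVec, dotProduct, Matrix.mul_apply, Fin.sum_univ_two,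
    Pi.smul_apply, Pi.add_apply, smul_eq_mul, Matrix.trace_fin_two] at e0 e1 f0 f1 g0 g1
  constructor <;> ext i j <;> fin_cases i <;> fin_cases j <;>
    simp [colMat, Matrix.mul_apply, Matrix.mulVec, dotProduct,
      Fin.sum_univ_two, Matrix.trace_fin_two]
  · linear_combination e0
  · linear_combination f0
  · linear_combination e1
  · linear_combination f1
  · linear_combination g0
  · linear_combination g1

end TraceConjAux

open TraceConjAux in
/-- Two irreducible representations of a two-generator group with the same traces on
`g₁`, `g₂` and `g₁ g₂` are conjugate. -/
theorem irreducible_rep_conj_of_traces {G : Type} [Group G] (g₁ g₂ : G)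
    (hgen : Subgroup.closure ({g₁, g₂} : Set G) = ⊤)
    (φ₁ φ₂ : G →* SL2C) (h₁ : IsIrreducibleRep φ₁) (h₂ : IsIrreducibleRep φ₂)
    (ht₁ : Matrix.trace ((φ₁ g₁ : Matrix (Fin 2) (Fin 2) ℂ)) =
      Matrix.trace ((φ₂ g₁ : Matrix (Fin 2) (Fin 2) ℂ)))
    (ht₂ : Matrix.trace ((φ₁ g₂ : Matrix (Fin 2) (Fin 2) ℂ)) =
      Matrix.trace ((φ₂ g₂ : Matrix (Fin 2) (Fin 2) ℂ)))
    (ht₃ : Matrix.trace ((φ₁ (g₁ * g₂) : Matrix (Fin 2) (Fin 2) ℂ)) =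
      Matrix.trace ((φ₂ (g₁ * g₂) : Matrix (Fin 2) (Fin 2) ℂ))) :
    ∃ P : SL2C, ∀ g : G, φ₂ g = P * φ₁ g * P⁻¹ := by
  set A : Mat2 := (φ₁ g₁ : Mat2) with hA
  set B : Mat2 := (φ₁ g₂ : Mat2) with hB
  set A' : Mat2 := (φ₂ g₁ : Mat2) with hA'
  set B' : Mat2 := (φ₂ g₂ : Mat2) with hB'
  have hdetA : A.det = 1 := (φ₁ g₁).2
  have hdetB : B.det = 1 := (φ₁ g₂).2
  have hdetA' : A'.det = 1 := (φ₂ g₁).2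
  have hdetB' : B'.det = 1 := (φ₂ g₂).2
  have htrA : A'.trace = A.trace := ht₁.symm
  have htrB : B'.trace = B.trace := ht₂.symm
  have htrAB : (A' * B').trace = (A * B).trace := by
    have h1 : (φ₁ (g₁ * g₂) : Mat2) = A * B := by
      rw [_root_.map_mul, Matrix.SpecialLinearGroup.coe_mul]
    have h2 : (φ₂ (g₁ * g₂) : Mat2) = A' * B' := by
      rw [_root_.map_mul, Matrix.SpecialLinearGroup.coe_mul]
    rw [h1, h2] at ht₃
    exact ht₃.symm
  -- A root of the common characteristic polynomial of `A` and `A'`.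
  obtain ⟨s, hs⟩ := IsAlgClosed.exists_pow_nat_eq (A.trace ^ 2 - 4 : ℂ) (n := 2) (by norm_num)
  set lam : ℂ := (A.trace + s) / 2 with hlamdef
  have hlam : lam * lam - A.trace * lam + 1 = 0 := by
    rw [hlamdef]
    linear_combination hs / 4
  have hlam' : lam * lam - A'.trace * lam + 1 = 0 := by rw [htrA]; exact hlam
  -- eigenvectors
  obtain ⟨v, hv, heig⟩ := exists_eigenvector A hdetA lam hlam
  obtain ⟨v', hv', heig'⟩ := exists_eigenvector A' hdetA' lam hlam'
  -- the bases (v, Bv) and (v'', B'v'')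
  have hMdet : (colMat v (B.mulVec v)).det ≠ 0 := by
    intro h0
    have hd : v 0 * (B.mulVec v) 1 - (B.mulVec v) 0 * v 1 = 0 := by
      rw [← h0, colMat, Matrix.det_fin_two]
      simp
    obtain ⟨c, hc⟩ := dep_of_det_eq_zero v (B.mulVec v) hv hd
    exact no_common_eigenvector g₁ g₂ hgen φ₁ h₁ v hv lam c heig hc
  have hM'det : (colMat v' (B'.mulVec v')).det ≠ 0 := by
    intro h0
    have hd : v' 0 * (B'.mulVec v') 1 - (B'.mulVec v') 0 * v' 1 = 0 := by
      rw [← h0, colMat, Matrix.det_fin_two]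
      simp
    obtain ⟨c, hc⟩ := dep_of_det_eq_zero v' (B'.mulVec v') hv' hd
    exact no_common_eigenvector g₁ g₂ hgen φ₂ h₂ v' hv' lam c heig' hc
  -- rescale v' so the two bases have the same determinant
  obtain ⟨c, hc2⟩ := IsAlgClosed.exists_pow_nat_eq
    ((colMat v (B.mulVec v)).det / (colMat v' (B'.mulVec v')).det : ℂ) (n := 2) (by norm_num)
  have hc0 : c ≠ 0 := by
    intro h0
    rw [h0] at hc2
    simp at hc2
    exact div_ne_zero hMdet hM'det (by simpa using hc2.symm)
  set v'' : Fin 2 → ℂ := c • v' with hv''def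
  have hv'' : v'' ≠ 0 := smul_ne_zero hc0 hv'
  have heig'' : A'.mulVec v'' = lam • v'' := by
    rw [hv''def, Matrix.mulVec_smul, heig', smul_comm]
  have hBv'' : B'.mulVec v'' = c • (B'.mulVec v') := by
    rw [hv''def, Matrix.mulVec_smul]
  set M : Mat2 := colMat v (B.mulVec v) with hMdef
  set M'' : Mat2 := colMat v'' (B'.mulVec v'') with hM''def
  have hM''detEq : M''.det = M.det := by
    have hstep : M''.det = c ^ 2 * (colMat v' (B'.mulVec v')).det := by
      rw [hM''def, colMat, colMat, Matrix.det_fin_two, Matrix.det_fin_two, hBv'', hv''def]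
      simp
      ring
    rw [hstep, hc2, div_mul_cancel₀ _ hM'det]
  obtain ⟨k1A, k1B⟩ := key A B hdetB lam v heig
  obtain ⟨k2A, k2B⟩ := key A' B' hdetB' lam v'' heig''
  rw [htrA, htrB, htrAB] at k2A
  rw [htrB] at k2B
  have hMunit : IsUnit M.det := isUnit_iff_ne_zero.2 hMdet
  have hMM : M * M⁻¹ = 1 := Matrix.mul_nonsing_inv M hMunit
  have hMM' : M⁻¹ * M = 1 := Matrix.nonsing_inv_mul M hMunit
  set P : Mat2 := M'' * M⁻¹ with hPdef
  have hdetP : P.det = 1 := by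
    rw [hPdef, Matrix.det_mul, Matrix.det_nonsing_inv, hM''detEq, Ring.inverse_eq_inv',
      mul_inv_cancel₀ hMdet]
  have conj : ∀ (X X' N : Mat2), X * M = M * N → X' * M'' = M'' * N → X' * P = P * X := by
    intro X X' N hxm hx'm
    have h5 : M * (N * M⁻¹) = X := by
      rw [← Matrix.mul_assoc, ← hxm, Matrix.mul_assoc, hMM, Matrix.mul_one]
    have h6 : N * M⁻¹ = M⁻¹ * X := by
      rw [← h5, ← Matrix.mul_assoc, hMM', Matrix.one_mul]
    rw [hPdef, ← Matrix.mul_assoc, hx'm, Matrix.mul_assoc, h6, ← Matrix.mul_assoc]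
  have hPA : A' * P = P * A := conj A A' _ k1A k2A
  have hPB : B' * P = P * B := conj B B' _ k1B k2B
  refine ⟨⟨P, hdetP⟩, ?_⟩
  set Ps : SL2C := ⟨P, hdetP⟩ with hPs
  set S : Subgroup G :=
    { carrier := {g | φ₂ g = Ps * φ₁ g * Ps⁻¹}
      one_mem' := by simp
      mul_mem' := by
        rintro a b ha hb
        show φ₂ (a * b) = Ps * φ₁ (a * b) * Ps⁻¹
        rw [_root_.map_mul, _root_.map_mul, ha, hb]
        group
      inv_mem' := by
        rintro a ha
        show φ₂ a⁻¹ = Ps * φ₁ a⁻¹ * Ps⁻¹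
        rw [_root_.map_inv, _root_.map_inv, ha]
        group } with hSdef
  intro g
  have hle : Subgroup.closure ({g₁, g₂} : Set G) ≤ S := by
    rw [Subgroup.closure_le]
    rintro x (rfl | rfl)
    · show φ₂ x = Ps * φ₁ x * Ps⁻¹
      rw [eq_mul_inv_iff_mul_eq]
      apply Subtype.ext
      rw [Matrix.SpecialLinearGroup.coe_mul, Matrix.SpecialLinearGroup.coe_mul]
      exact hPA
    · show φ₂ x = Ps * φ₁ x * Ps⁻¹
      rw [eq_mul_inv_iff_mul_eq]
      apply Subtype.ext
      rw [Matrix.SpecialLinearGroup.coe_mul, Matrix.SpecialLinearGroup.coe_mul]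
      exact hPB
  rw [hgen] at hle
  exact hle (Subgroup.mem_top g)
end

section
/- Let p ≥ 1 be an integer and let A ∈ SL₂(ℂ) satisfy A^p = I or A^p = −I, and tr A ≠ 2 and tr A ≠ −2. Then the kernel of the complex-linear endomorphism of sl₂(ℂ) given by X ↦ Σ_{j=0}^{p−1} A^j X A^{−j} is a 2-dimensional complex subspace of sl₂(ℂ). -/
open Matrix Finset LinearMap

private lemma auxConjPow {R : Type*} [Ring R] {P Q A : R} (hPQ : P * Q = 1) (hQP : Q * P = 1)
    (n : ℕ) : (Q * A * P) ^ n = Q * A ^ n * P := by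
  induction n with
  | zero => simpa using hQP.symm
  | succ n ih =>
    rw [pow_succ, ih, pow_succ]
    have h : ∀ x : R, P * (Q * x) = x := fun x => by rw [← mul_assoc, hPQ, one_mul]
    simp only [mul_assoc, h]

private def entryLM (i j : Fin 2) : Matrix (Fin 2) (Fin 2) ℂ →ₗ[ℂ] ℂ where
  toFun X := X i j
  map_add' _ _ := rfl
  map_smul' _ _ := rfl

@[simp] private lemma entryLM_apply (i j : Fin 2) (X : Matrix (Fin 2) (Fin 2) ℂ) :
    entryLM i j X = X i j := rfl

private lemma exists_roots (t : ℂ) : ∃ l m : ℂ, l * m = 1 ∧ l + m = t := by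
  obtain ⟨z, hz⟩ := IsAlgClosed.exists_pow_nat_eq (t ^ 2 - 4) (n := 2) (by norm_num)
  refine ⟨(t + z) / 2, (t - z) / 2, ?_, by ring⟩
  field_simp
  linear_combination -hz

private lemma exists_diag (A : Matrix (Fin 2) (Fin 2) ℂ) (hdet : A.det = 1)
    (h2 : A.trace ≠ 2) (h2' : A.trace ≠ -2) :
    ∃ (P Q : Matrix (Fin 2) (Fin 2) ℂ) (l m : ℂ),
      P * Q = 1 ∧ Q * P = 1 ∧ Q * A * P = diagonal ![l, m] ∧ l * m = 1 ∧ l + m = A.trace := by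
  rw [det_fin_two] at hdet
  rw [trace_fin_two] at h2 h2' ⊢
  obtain ⟨l, m, hlm, hsum⟩ := exists_roots (A 0 0 + A 1 1)
  have hml : m - l ≠ 0 := by
    intro h
    have hm : m = l := by linear_combination h
    have h1 : (l - 1) * (l + 1) = 0 := by linear_combination hlm - l * hm
    rcases mul_eq_zero.1 h1 with hl1 | hl1
    · exact h2 (by linear_combination -hsum + hm + 2 * hl1)
    · exact h2' (by linear_combination -hsum + hm + 2 * hl1)
  have hl : l * l = (A 0 0 + A 1 1) * l - 1 := by linear_combination l * hsum - hlm
  have hm : m * m = (A 0 0 + A 1 1) * m - 1 := by linear_combination m * hsum - hlm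
  by_cases hb : A 0 1 ≠ 0
  · set P : Matrix (Fin 2) (Fin 2) ℂ := !![A 0 1, A 0 1; l - A 0 0, m - A 0 0] with hP
    have hdP : IsUnit P.det := by
      rw [hP, det_fin_two_of]
      apply isUnit_iff_ne_zero.2
      intro h
      exact hml (by
        rcases mul_eq_zero.1 (show A 0 1 * (m - l) = 0 by linear_combination h) with h' | h'
        · exact absurd h' hb
        · exact h')
    have hAP : A * P = P * diagonal ![l, m] := by
      ext i j
      fin_cases i <;> fin_cases j <;>
        simp [hP, Matrix.mul_apply, Matrix.mul_diagonal, Fin.sum_univ_two]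
      · ring
      · ring
      · linear_combination -hl - hdet
      · linear_combination -hm - hdet
    exact ⟨P, P⁻¹, l, m, mul_nonsing_inv P hdP, nonsing_inv_mul P hdP, by
      rw [mul_assoc, hAP, ← mul_assoc, nonsing_inv_mul P hdP, one_mul], hlm, hsum⟩
  · push_neg at hb
    by_cases hc : A 1 0 ≠ 0
    · set P : Matrix (Fin 2) (Fin 2) ℂ := !![l - A 1 1, m - A 1 1; A 1 0, A 1 0] with hP
      have hdP : IsUnit P.det := by
        rw [hP, det_fin_two_of]
        apply isUnit_iff_ne_zero.2
        intro h
        exact hml (by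
          rcases mul_eq_zero.1 (show A 1 0 * (m - l) = 0 by linear_combination -h) with h' | h'
          · exact absurd h' hc
          · exact h')
      have hAP : A * P = P * diagonal ![l, m] := by
        ext i j
        fin_cases i <;> fin_cases j <;>
          simp [hP, Matrix.mul_apply, Matrix.mul_diagonal, Fin.sum_univ_two]
        · linear_combination -hl - hdet
        · linear_combination -hm - hdet
        · ring
        · ring
      exact ⟨P, P⁻¹, l, m, mul_nonsing_inv P hdP, nonsing_inv_mul P hdP, by
        rw [mul_assoc, hAP, ← mul_assoc, nonsing_inv_mul P hdP, one_mul], hlm, hsum⟩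
    · push_neg at hc
      refine ⟨1, 1, A 0 0, A 1 1, one_mul 1, one_mul 1, ?_,
        by linear_combination hdet + A 1 0 * hb, rfl⟩
      rw [one_mul, mul_one]
      ext i j
      fin_cases i <;> fin_cases j <;> simp [diagonal, hb, hc]

/-- If `A ∈ SL₂(ℂ)` satisfies `A^p = ±I` and `tr A ≠ ±2`, then the kernel of the
endomorphism `X ↦ ∑_{j<p} A^j X A^{-j}` of `sl₂(ℂ)` (the trace-zero matrices)
has complex dimension 2. -/
theorem ker_sum_conj_finrank_two (p : ℕ) (hp : 1 ≤ p) (A : SL2C)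
    (hA : A ^ p = 1 ∨ ((A ^ p : SL2C) : Matrix (Fin 2) (Fin 2) ℂ) = -1)
    (h2 : Matrix.trace (A : Matrix (Fin 2) (Fin 2) ℂ) ≠ 2)
    (h2' : Matrix.trace (A : Matrix (Fin 2) (Fin 2) ℂ) ≠ -2) :
    Module.finrank ℂ
      ↥(LinearMap.ker (∑ j ∈ Finset.range p,
          (LinearMap.mulLeft ℂ ((A : Matrix (Fin 2) (Fin 2) ℂ) ^ j)).comp
            (LinearMap.mulRight ℂ (((A⁻¹ : SL2C) : Matrix (Fin 2) (Fin 2) ℂ) ^ j))) ⊓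
        LinearMap.ker (Matrix.traceLinearMap (Fin 2) ℂ ℂ)) = 2 := by
  have hp0 : (p : ℂ) ≠ 0 := Nat.cast_ne_zero.2 (by omega)
  set Am := (A : Matrix (Fin 2) (Fin 2) ℂ) with hAm_def
  set B := ((A⁻¹ : SL2C) : Matrix (Fin 2) (Fin 2) ℂ) with hB_def
  have hAB : Am * B = 1 := by
    rw [hAm_def, hB_def, ← Matrix.SpecialLinearGroup.coe_mul]; simp
  have hBA : B * Am = 1 := by
    rw [hAm_def, hB_def, ← Matrix.SpecialLinearGroup.coe_mul]; simp
  have cancel : ∀ {U V : Matrix (Fin 2) (Fin 2) ℂ}, U * V = 1 →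
      ∀ x : Matrix (Fin 2) (Fin 2) ℂ, U * (V * x) = x :=
    fun h x => by rw [← mul_assoc, h, one_mul]
  set L := (∑ j ∈ Finset.range p,
      (LinearMap.mulLeft ℂ (Am ^ j)).comp (LinearMap.mulRight ℂ (B ^ j))) with hLdef
  have hLapp : ∀ X, L X = ∑ j ∈ Finset.range p, Am ^ j * (X * B ^ j) := by
    intro X
    rw [hLdef]
    simp
  -- Step 1: ker L ≤ ker trace
  have hle : LinearMap.ker L ≤ LinearMap.ker (Matrix.traceLinearMap (Fin 2) ℂ ℂ) := by
    intro X hX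
    rw [LinearMap.mem_ker] at hX ⊢
    have htr : Matrix.trace (L X) = (p : ℂ) * Matrix.trace X := by
      rw [hLapp, trace_sum]
      have h' : ∀ j ∈ Finset.range p, Matrix.trace (Am ^ j * (X * B ^ j)) = Matrix.trace X := by
        intro j _
        rw [Matrix.trace_mul_comm, mul_assoc]
        have hcom : B ^ j * Am ^ j = 1 := by
          rw [← Commute.mul_pow (hBA.trans hAB.symm) j, hBA, one_pow]
        rw [hcom, mul_one]
      rw [Finset.sum_congr rfl h', Finset.sum_const, Finset.card_range, nsmul_eq_mul]
    have h0 : (p : ℂ) * Matrix.trace X = 0 := by rw [← htr, hX]; simp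
    simpa [Matrix.traceLinearMap] using (mul_eq_zero.1 h0).resolve_left hp0
  rw [inf_eq_left.2 hle]
  -- Step 2: diagonalize
  obtain ⟨P, Q, l, m, hPQ, hQP, hD, hlm, hsum⟩ :=
    exists_diag Am (Matrix.SpecialLinearGroup.det_coe A) h2 h2'
  have hconjP : ∀ x : Matrix (Fin 2) (Fin 2) ℂ, P * (Q * x * P) * Q = x := fun x => by
    simp only [mul_assoc, hPQ, mul_one]
    exact cancel hPQ x
  have hconjQ : ∀ x : Matrix (Fin 2) (Fin 2) ℂ, Q * (P * x * Q) * P = x := fun x => by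
    simp only [mul_assoc, hQP, mul_one]
    exact cancel hQP x
  have hAmPDQ : Am = P * diagonal ![l, m] * Q := by
    have h' := hconjP Am
    rw [hD] at h'
    exact h'.symm
  have hDD' : diagonal ![l, m] * diagonal ![m, l] = (1 : Matrix (Fin 2) (Fin 2) ℂ) := by
    rw [diagonal_mul_diagonal]
    have h' : (fun i => ![l, m] i * ![m, l] i) = fun _ => (1 : ℂ) := by
      funext i
      fin_cases i
      · simpa using hlm
      · simpa [mul_comm] using hlm
    rw [h', diagonal_one]
  have h1 : (Q * B * P) * (Q * Am * P) = 1 := by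
    simp only [mul_assoc, cancel hPQ, cancel hBA]
    exact hQP
  have hE : Q * B * P = diagonal ![m, l] := by
    have h3 : (Q * Am * P) * diagonal ![m, l] = 1 := by rw [hD]; exact hDD'
    calc Q * B * P = (Q * B * P) * ((Q * Am * P) * diagonal ![m, l]) := by rw [h3, mul_one]
      _ = ((Q * B * P) * (Q * Am * P)) * diagonal ![m, l] := by simp only [mul_assoc]
      _ = diagonal ![m, l] := by rw [h1, one_mul]
  have hBPDQ : B = P * diagonal ![m, l] * Q := by
    have h' := hconjP B
    rw [hE] at h'
    exact h'.symm
  -- eigenvalue facts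
  have hlne0 : l ≠ 0 := by
    intro h
    rw [h, zero_mul] at hlm
    exact zero_ne_one hlm
  have hmne0 : m ≠ 0 := by
    intro h
    rw [h, mul_zero] at hlm
    exact zero_ne_one hlm
  have hl2 : l * l ≠ 1 := by
    intro h
    have hmeq : m = l := mul_left_cancel₀ hlne0 (hlm.trans h.symm)
    have h1' : (l - 1) * (l + 1) = 0 := by linear_combination h
    rcases mul_eq_zero.1 h1' with hl1 | hl1
    · exact h2 (by linear_combination -hsum + hmeq + 2 * hl1)
    · exact h2' (by linear_combination -hsum + hmeq + 2 * hl1)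
  have hm2 : m * m ≠ 1 := by
    intro h
    have hleq : l = m := mul_right_cancel₀ hmne0 (hlm.trans h.symm)
    have h1' : (m - 1) * (m + 1) = 0 := by linear_combination h
    rcases mul_eq_zero.1 h1' with hm1 | hm1
    · exact h2 (by linear_combination -hsum + hleq + 2 * hm1)
    · exact h2' (by linear_combination -hsum + hleq + 2 * hm1)
  have hApow : Am ^ p = 1 ∨ Am ^ p = -1 := by
    rcases hA with h | h
    · left
      rw [hAm_def, ← Matrix.SpecialLinearGroup.coe_pow, h]
      simp
    · right
      rw [hAm_def, ← Matrix.SpecialLinearGroup.coe_pow]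
      exact h
  have hDpow : (diagonal ![l, m] : Matrix (Fin 2) (Fin 2) ℂ) ^ p = Q * Am ^ p * P := by
    rw [← hD, auxConjPow hPQ hQP]
  have hdiag_pm : (diagonal (![l, m] ^ p) : Matrix (Fin 2) (Fin 2) ℂ) = 1 ∨
      (diagonal (![l, m] ^ p) : Matrix (Fin 2) (Fin 2) ℂ) = -1 := by
    rw [← diagonal_pow, hDpow]
    rcases hApow with h | h
    · left; rw [h, mul_one, hQP]
    · right; rw [h, mul_neg_one, neg_mul, hQP]
  have hlp : l ^ p = 1 ∨ l ^ p = -1 := by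
    rcases hdiag_pm with h | h
    · left
      have := congrFun (congrFun h 0) 0
      simpa using this
    · right
      have := congrFun (congrFun h 0) 0
      simpa using this
  have hmp : m ^ p = 1 ∨ m ^ p = -1 := by
    rcases hdiag_pm with h | h
    · left
      have := congrFun (congrFun h 1) 1
      simpa using this
    · right
      have := congrFun (congrFun h 1) 1
      simpa using this
  have hl2p : (l * l) ^ p = 1 := by
    rw [mul_pow]
    rcases hlp with h | h <;> rw [h] <;> norm_num
  have hm2p : (m * m) ^ p = 1 := by
    rw [mul_pow]
    rcases hmp with h | h <;> rw [h] <;> norm_num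
  have hS01 : ∑ j ∈ Finset.range p, (l * l) ^ j = 0 := by
    rw [geom_sum_eq hl2 p, hl2p]
    simp
  have hS10 : ∑ j ∈ Finset.range p, (m * m) ^ j = 0 := by
    rw [geom_sum_eq hm2 p, hm2p]
    simp
  have hSp : ∑ j ∈ Finset.range p, (l * m) ^ j = (p : ℂ) := by
    rw [hlm]
    simp
  -- Step 3: transport to the diagonal case
  set L' := (∑ j ∈ Finset.range p,
      (LinearMap.mulLeft ℂ ((diagonal ![l, m] : Matrix (Fin 2) (Fin 2) ℂ) ^ j)).comp
        (LinearMap.mulRight ℂ ((diagonal ![m, l] : Matrix (Fin 2) (Fin 2) ℂ) ^ j))) with hL'def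
  have hL'app : ∀ X, L' X = ∑ j ∈ Finset.range p,
      (diagonal ![l, m] : Matrix (Fin 2) (Fin 2) ℂ) ^ j *
        (X * (diagonal ![m, l] : Matrix (Fin 2) (Fin 2) ℂ) ^ j) := by
    intro X
    rw [hL'def]
    simp
  have hLP : ∀ X, L X = P * (L' (Q * (X * P))) * Q := by
    intro X
    rw [hLapp, hL'app, Finset.mul_sum, Finset.sum_mul]
    refine Finset.sum_congr rfl fun j _ => ?_
    rw [hAmPDQ, hBPDQ, auxConjPow hQP hPQ, auxConjPow hQP hPQ]
    simp only [mul_assoc]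
  let e : Matrix (Fin 2) (Fin 2) ℂ ≃ₗ[ℂ] Matrix (Fin 2) (Fin 2) ℂ :=
    LinearEquiv.ofLinear ((LinearMap.mulLeft ℂ Q).comp (LinearMap.mulRight ℂ P))
      ((LinearMap.mulLeft ℂ P).comp (LinearMap.mulRight ℂ Q))
      (by
        ext X
        simp only [LinearMap.comp_apply, LinearMap.mulLeft_apply, LinearMap.mulRight_apply,
          LinearMap.id_coe, id_eq]
        simp only [mul_assoc, cancel hQP, hQP, mul_one])
      (by
        ext X
        simp only [LinearMap.comp_apply, LinearMap.mulLeft_apply, LinearMap.mulRight_apply,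
          LinearMap.id_coe, id_eq]
        simp only [mul_assoc, cancel hPQ, hPQ, mul_one])
  have hker : LinearMap.ker L = Submodule.comap (e : Matrix (Fin 2) (Fin 2) ℂ →ₗ[ℂ]
      Matrix (Fin 2) (Fin 2) ℂ) (LinearMap.ker L') := by
    ext X
    simp only [LinearMap.mem_ker, Submodule.mem_comap, LinearEquiv.coe_coe]
    have he : e X = Q * (X * P) := rfl
    rw [he, hLP X]
    constructor
    · intro h
      have h0 : Q * (P * (L' (Q * (X * P))) * Q) * P = Q * 0 * P := by rw [h]
      rwa [hconjQ, mul_zero, zero_mul] at h0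
    · intro h
      rw [h, mul_zero, zero_mul]
  rw [hker, Submodule.comap_equiv_eq_map_symm, LinearEquiv.finrank_map_eq]
  -- Step 4: kernel of the diagonal operator
  have hL'ent : ∀ (X : Matrix (Fin 2) (Fin 2) ℂ) (i k : Fin 2),
      (L' X) i k = (∑ j ∈ Finset.range p, (![l, m] i * ![m, l] k) ^ j) * X i k := by
    intro X i k
    rw [hL'app, Matrix.sum_apply, Finset.sum_mul]
    refine Finset.sum_congr rfl fun j _ => ?_
    rw [diagonal_pow, diagonal_pow, diagonal_mul, mul_diagonal, Pi.pow_apply, Pi.pow_apply,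
      mul_pow]
    ring
  have hkerL' : LinearMap.ker L' = LinearMap.ker ((entryLM 0 0).prod (entryLM 1 1)) := by
    ext X
    simp only [LinearMap.mem_ker, LinearMap.prod_apply, Function.prod, Prod.mk_eq_zero,
      entryLM_apply]
    constructor
    · intro h
      have h00 : (L' X) 0 0 = 0 := by rw [h]; rfl
      have h11 : (L' X) 1 1 = 0 := by rw [h]; rfl
      rw [hL'ent] at h00 h11
      simp only [cons_val_zero, cons_val_one, head_cons] at h00 h11
      rw [hSp] at h00
      rw [show m * l = l * m from mul_comm m l, hSp] at h11
      exact ⟨(mul_eq_zero.1 h00).resolve_left hp0, (mul_eq_zero.1 h11).resolve_left hp0⟩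
    · rintro ⟨h00, h11⟩
      ext i k
      rw [hL'ent]
      fin_cases i <;> fin_cases k <;>
        simp only [Fin.mk_zero, Fin.mk_one, Fin.isValue, cons_val_zero, cons_val_one,
          head_cons, Matrix.zero_apply]
      · rw [h00, mul_zero]
      · rw [hS01, zero_mul]
      · rw [hS10, zero_mul]
      · rw [h11, mul_zero]
  rw [hkerL']
  have hsurj : Function.Surjective ((entryLM 0 0).prod (entryLM 1 1)) := by
    rintro ⟨u, v⟩
    refine ⟨diagonal ![u, v], ?_⟩
    simp [LinearMap.prod_apply, Prod.ext_iff]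
  have hrn := LinearMap.finrank_range_add_finrank_ker ((entryLM 0 0).prod (entryLM 1 1))
  rw [LinearMap.range_eq_top.2 hsurj, finrank_top, Module.finrank_prod,
    Module.finrank_self] at hrn
  have h4 : Module.finrank ℂ (Matrix (Fin 2) (Fin 2) ℂ) = 4 := by
    simp [Module.finrank_matrix]
  rw [h4] at hrn
  omega
end

section
/- Let p, q, r be pairwise relatively prime positive integers with q and r odd, and let a, b, c be integers with aqr + bpr + cpq = 1, a odd, and b and c even. Let π be the group with presentation ⟨x, y, z, h | h x h⁻¹ x⁻¹ = 1, h y h⁻¹ y⁻¹ = 1, h z h⁻¹ z⁻¹ = 1, x^p = h^a, y^q = h^b, z^r = h^c, xyz = 1⟩, and let T(2p, q, r) be the triangle group with presentation ⟨x, y, z | x^{2p} = 1, y^q = 1, z^r = 1, xyz = 1⟩. Then there is a bijection between the set of conjugacy classes of irreducible representations π → SL₂(ℂ) and the set of conjugacy classes of irreducible representations T(2p,q,r) → SL₂(ℂ). -/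
/-- Conjugacy of irreducible representations: `ρ₂ = P ρ₁ P⁻¹` for some `P ∈ SL₂(ℂ)`. -/
def ConjRel {G : Type} [Group G]
    (ρ₁ ρ₂ : {ρ : G →* SL2C // IsIrreducibleRep ρ}) : Prop :=
  ∃ P : SL2C, ∀ g : G, ρ₂.1 g = P * ρ₁.1 g * P⁻¹

/-- The relations of the presentation
`⟨x, y, z, h ∣ h central, x^p = h^a, y^q = h^b, z^r = h^c, xyz = 1⟩` of the fundamental
group of the Brieskorn sphere `Σ(p,q,r)`; generators `x, y, z, h` are `0, 1, 2, 3`. -/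
def brieskornRels (p q r : ℕ) (a b c : ℤ) : Set (FreeGroup (Fin 4)) :=
  {FreeGroup.of 3 * FreeGroup.of 0 * (FreeGroup.of 3)⁻¹ * (FreeGroup.of 0)⁻¹,
   FreeGroup.of 3 * FreeGroup.of 1 * (FreeGroup.of 3)⁻¹ * (FreeGroup.of 1)⁻¹,
   FreeGroup.of 3 * FreeGroup.of 2 * (FreeGroup.of 3)⁻¹ * (FreeGroup.of 2)⁻¹,
   FreeGroup.of 0 ^ p * ((FreeGroup.of 3) ^ a)⁻¹,
   FreeGroup.of 1 ^ q * ((FreeGroup.of 3) ^ b)⁻¹,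
   FreeGroup.of 2 ^ r * ((FreeGroup.of 3) ^ c)⁻¹,
   FreeGroup.of 0 * FreeGroup.of 1 * FreeGroup.of 2}

/-- The relations of the triangle group presentation
`T(a,b,c) = ⟨x, y, z ∣ x^a = y^b = z^c = xyz = 1⟩`; generators `x, y, z` are `0, 1, 2`. -/
def triangleRels (a b c : ℕ) : Set (FreeGroup (Fin 3)) :=
  {FreeGroup.of 0 ^ a, FreeGroup.of 1 ^ b, FreeGroup.of 2 ^ c,
   FreeGroup.of 0 * FreeGroup.of 1 * FreeGroup.of 2}

/- ### auxiliary lemmas -/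


lemma sl2_sq_eq_one {M : SL2C} (h : M * M = 1) :
    (M : Matrix (Fin 2) (Fin 2) ℂ) = 1 ∨ (M : Matrix (Fin 2) (Fin 2) ℂ) = -1 := by
  have hinv : M⁻¹ = M := inv_eq_of_mul_eq_one_right h
  have hadj : (M : Matrix (Fin 2) (Fin 2) ℂ) = Matrix.adjugate (M : Matrix (Fin 2) (Fin 2) ℂ) := by
    conv_lhs => rw [← hinv]
    exact Matrix.SpecialLinearGroup.coe_inv M
  rw [Matrix.adjugate_fin_two] at hadj
  have h00 : (M : Matrix (Fin 2) (Fin 2) ℂ) 0 0 = (M : Matrix (Fin 2) (Fin 2) ℂ) 1 1 := by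
    have := congrFun (congrFun hadj 0) 0; simpa using this
  have h01 : (M : Matrix (Fin 2) (Fin 2) ℂ) 0 1 = 0 := by
    have := congrFun (congrFun hadj 0) 1; simp at this
    linear_combination (this : _) / 2
  have h10 : (M : Matrix (Fin 2) (Fin 2) ℂ) 1 0 = 0 := by
    have := congrFun (congrFun hadj 1) 0; simp at this
    linear_combination (this : _) / 2
  have hdet : ((M : Matrix (Fin 2) (Fin 2) ℂ) 0 0) * ((M : Matrix (Fin 2) (Fin 2) ℂ) 0 0) = 1 := by
    have := M.2
    rw [Matrix.det_fin_two] at this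
    rw [h01, h10] at this
    rw [← h00] at this
    simpa using this
  rcases mul_self_eq_one_iff.mp hdet with h1 | h1
  · left
    rw [Matrix.eta_fin_two (M : Matrix (Fin 2) (Fin 2) ℂ), ← h00, h01, h10, h1]
    exact Matrix.one_fin_two.symm
  · right
    rw [Matrix.eta_fin_two (M : Matrix (Fin 2) (Fin 2) ℂ), ← h00, h01, h10, h1]
    ext i j
    fin_cases i <;> fin_cases j <;> simp

lemma schur {G : Type} [Group G] (ρ : G →* SL2C) (hirr : IsIrreducibleRep ρ) (M : SL2C)
    (hM : ∀ g, M * ρ g = ρ g * M) :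
    (M : Matrix (Fin 2) (Fin 2) ℂ) = 1 ∨ (M : Matrix (Fin 2) (Fin 2) ℂ) = -1 := by
  set A : Matrix (Fin 2) (Fin 2) ℂ := (M : Matrix (Fin 2) (Fin 2) ℂ) with hA
  by_cases hsc : ∃ e : ℂ, A = e • (1 : Matrix (Fin 2) (Fin 2) ℂ)
  · obtain ⟨e, he⟩ := hsc
    have hdet : e * e = 1 := by
      have h2 := M.2
      rw [← hA] at h2
      rw [he, Matrix.det_smul, Matrix.det_one] at h2
      simpa [sq] using h2
    rcases mul_self_eq_one_iff.mp hdet with h1 | h1 <;> rw [he, h1] <;> simp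
  · exfalso
    set f : Module.End ℂ (Fin 2 → ℂ) := Matrix.mulVecLin A with hf
    obtain ⟨μ, hμ⟩ := Module.End.exists_eigenvalue f
    obtain ⟨v, hv⟩ := hμ.exists_hasEigenvector
    have hvmem : v ∈ f.eigenspace μ := hv.1
    have hvne : v ≠ 0 := hv.2
    have hnetop : f.eigenspace μ ≠ ⊤ := by
      intro htop
      apply hsc
      refine ⟨μ, ?_⟩
      ext i j
      have hj : (Pi.single j 1 : Fin 2 → ℂ) ∈ f.eigenspace μ := htop ▸ Submodule.mem_top
      rw [Module.End.mem_eigenspace_iff] at hj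
      have := congrFun hj i
      simp only [hf, Matrix.mulVecLin_apply] at this
      rw [Matrix.mulVec_single] at this
      simp only [Pi.smul_apply, smul_eq_mul] at this
      simp only [Matrix.smul_apply, Matrix.one_apply, smul_eq_mul]
      rw [op_smul_eq_mul, mul_one] at this
      change A i j = _ at this
      rw [this]
      by_cases hij : i = j <;> simp [hij, Pi.single_apply, eq_comm]
    have hfr : Module.finrank ℂ (f.eigenspace μ) = 1 := by
      have h1 : 0 < Module.finrank ℂ (f.eigenspace μ) := by
        apply Module.finrank_pos_iff.mpr
        exact ⟨⟨⟨v, hvmem⟩, 0, by simp [Subtype.ext_iff, hvne]⟩⟩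
      have h2 : Module.finrank ℂ (f.eigenspace μ) < 2 := by
        have := Submodule.finrank_lt (K := ℂ) (V := Fin 2 → ℂ) hnetop
        simpa using this
      omega
    apply hirr
    refine ⟨v, hvne, fun g => ?_⟩
    have hmem : Matrix.mulVec (ρ g : Matrix (Fin 2) (Fin 2) ℂ) v ∈ f.eigenspace μ := by
      rw [Module.End.mem_eigenspace_iff]
      have hcomm : A * (ρ g : Matrix (Fin 2) (Fin 2) ℂ) = (ρ g : Matrix (Fin 2) (Fin 2) ℂ) * A :=
        congrArg Subtype.val (hM g)
      have hAv : Matrix.mulVec A v = μ • v := Module.End.mem_eigenspace_iff.mp hvmem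
      simp only [hf, Matrix.mulVecLin_apply]
      rw [Matrix.mulVec_mulVec, hcomm, ← Matrix.mulVec_mulVec, hAv, Matrix.mulVec_smul]
    obtain ⟨c, hc⟩ := (finrank_eq_one_iff_of_nonzero' (⟨v, hvmem⟩ : f.eigenspace μ)
      (by simp [Subtype.ext_iff, hvne])).mp hfr ⟨_, hmem⟩
    exact ⟨c, by simpa [Subtype.ext_iff, eq_comm] using congrArg Subtype.val hc⟩

lemma eigen_all {G : Type} [Group G] (ρ : G →* SL2C) (v : Fin 2 → ℂ) (hv : v ≠ 0)
    (S : Set G) (hgen : Subgroup.closure S = ⊤)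
    (h : ∀ g ∈ S, ∃ c : ℂ, Matrix.mulVec (ρ g : Matrix (Fin 2) (Fin 2) ℂ) v = c • v) :
    ∀ g : G, ∃ c : ℂ, Matrix.mulVec (ρ g : Matrix (Fin 2) (Fin 2) ℂ) v = c • v := by
  have key : ∀ g : G, (∃ c : ℂ, Matrix.mulVec (ρ g : Matrix (Fin 2) (Fin 2) ℂ) v = c • v) →
      ∃ c : ℂ, c ≠ 0 ∧ Matrix.mulVec (ρ g : Matrix (Fin 2) (Fin 2) ℂ) v = c • v := by
    rintro g ⟨c, hc⟩
    refine ⟨c, fun hc0 => hv ?_, hc⟩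
    subst hc0
    have : Matrix.mulVec ((ρ g⁻¹) : Matrix (Fin 2) (Fin 2) ℂ)
        (Matrix.mulVec (ρ g : Matrix (Fin 2) (Fin 2) ℂ) v) = v := by
      rw [Matrix.mulVec_mulVec, ← Matrix.SpecialLinearGroup.coe_mul, ← map_mul, inv_mul_cancel]
      simp
    rw [hc] at this
    simpa using this.symm
  let H : Subgroup G :=
    { carrier := {g | ∃ c : ℂ, Matrix.mulVec (ρ g : Matrix (Fin 2) (Fin 2) ℂ) v = c • v}
      one_mem' := ⟨1, by simp⟩
      mul_mem' := by
        rintro g g' ⟨c, hc⟩ ⟨c', hc'⟩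
        refine ⟨c * c', ?_⟩
        rw [map_mul, Matrix.SpecialLinearGroup.coe_mul, ← Matrix.mulVec_mulVec, hc',
          Matrix.mulVec_smul, hc, smul_smul, mul_comm]
      inv_mem' := by
        rintro g hg
        obtain ⟨c, hc0, hc⟩ := key g hg
        refine ⟨c⁻¹, ?_⟩
        have : Matrix.mulVec ((ρ g⁻¹) : Matrix (Fin 2) (Fin 2) ℂ)
            (Matrix.mulVec (ρ g : Matrix (Fin 2) (Fin 2) ℂ) v) = v := by
          rw [Matrix.mulVec_mulVec, ← Matrix.SpecialLinearGroup.coe_mul, ← map_mul,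
            inv_mul_cancel]
          simp
        rw [hc, Matrix.mulVec_smul] at this
        rw [eq_comm, inv_smul_eq_iff₀ hc0]
        exact this.symm }
  intro g
  have hle : Subgroup.closure S ≤ H := (Subgroup.closure_le H).mpr h
  rw [hgen] at hle
  exact hle trivial

lemma zpow_odd_eq {G : Type*} [Group G] {x : G} (hx : x * x = 1) {n : ℤ} (hn : Odd n) :
    x ^ n = x := by
  obtain ⟨k, hk⟩ := hn
  rw [hk, zpow_add, zpow_mul, zpow_one, zpow_two, hx, one_zpow, one_mul]

lemma zpow_even_eq_one {G : Type*} [Group G] {x : G} (hx : x * x = 1) {n : ℤ} (hn : Even n) :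
    x ^ n = 1 := by
  obtain ⟨k, hk⟩ := hn
  rw [hk, ← two_mul, zpow_mul, zpow_two, hx, one_zpow]

lemma commute_of_scalar {ε y : SL2C} (h : ∃ e : ℂ, (ε : Matrix (Fin 2) (Fin 2) ℂ) = e • 1) :
    ε * y = y * ε := by
  obtain ⟨e, he⟩ := h
  apply Subtype.ext
  show (ε : Matrix (Fin 2) (Fin 2) ℂ) * y = (y : Matrix (Fin 2) (Fin 2) ℂ) * ε
  rw [he, smul_mul_assoc, one_mul, mul_smul_comm, mul_one]

lemma pm_one_facts {ε : SL2C} (h : (ε : Matrix (Fin 2) (Fin 2) ℂ) = 1 ∨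
    (ε : Matrix (Fin 2) (Fin 2) ℂ) = -1) :
    ε * ε = 1 ∧ ∃ e : ℂ, (ε : Matrix (Fin 2) (Fin 2) ℂ) = e • 1 := by
  constructor
  · apply Subtype.ext
    show (ε : Matrix (Fin 2) (Fin 2) ℂ) * ε = 1
    rcases h with h | h <;> rw [h] <;> simp
  · rcases h with h | h
    · exact ⟨1, by simp [h]⟩
    · exact ⟨-1, by simp [h]⟩

lemma mk_rel {α : Type*} {rels : Set (FreeGroup α)} {w : FreeGroup α} (h : w ∈ rels) :
    PresentedGroup.mk rels w = 1 :=
  (QuotientGroup.eq_one_iff _).2 (Subgroup.subset_normalClosure h)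


/-- There is a bijection between conjugacy classes of irreducible `SL₂(ℂ)`
representations of `π₁ Σ(p,q,r)` and those of the triangle group `T(2p,q,r)`. -/
theorem brieskorn_triangle_conj_classes_equiv
    (p q r : ℕ) (hp : 0 < p) (hq : 0 < q) (hr : 0 < r)
    (hqodd : Odd q) (hrodd : Odd r)
    (hpq : Nat.Coprime p q) (hpr : Nat.Coprime p r) (hqr : Nat.Coprime q r)
    (a b c : ℤ) (habc : a * q * r + b * p * r + c * p * q = 1)
    (haodd : Odd a) (hbeven : Even b) (hceven : Even c) :
    Nonempty
      (Quot (ConjRel (G := PresentedGroup (brieskornRels p q r a b c))) ≃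
       Quot (ConjRel (G := PresentedGroup (triangleRels (2 * p) q r)))) := by
  set RB := brieskornRels p q r a b c with hRB
  set RT := triangleRels (2 * p) q r with hRT
  -- group-level relations in the Brieskorn group
  have hB0 : (PresentedGroup.of (rels := RB) 3) * PresentedGroup.of 0
      = PresentedGroup.of 0 * PresentedGroup.of 3 := by
    have h1 := mk_rel (rels := RB)
      (w := FreeGroup.of 3 * FreeGroup.of 0 * (FreeGroup.of 3)⁻¹ * (FreeGroup.of 0)⁻¹)
      (by simp [hRB, brieskornRels])
    simp only [map_mul, map_inv] at h1
    rw [mul_inv_eq_one, mul_inv_eq_iff_eq_mul] at h1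
    exact h1
  have hB1 : (PresentedGroup.of (rels := RB) 3) * PresentedGroup.of 1
      = PresentedGroup.of 1 * PresentedGroup.of 3 := by
    have h1 := mk_rel (rels := RB)
      (w := FreeGroup.of 3 * FreeGroup.of 1 * (FreeGroup.of 3)⁻¹ * (FreeGroup.of 1)⁻¹)
      (by simp [hRB, brieskornRels])
    simp only [map_mul, map_inv] at h1
    rw [mul_inv_eq_one, mul_inv_eq_iff_eq_mul] at h1
    exact h1
  have hB2 : (PresentedGroup.of (rels := RB) 3) * PresentedGroup.of 2
      = PresentedGroup.of 2 * PresentedGroup.of 3 := by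
    have h1 := mk_rel (rels := RB)
      (w := FreeGroup.of 3 * FreeGroup.of 2 * (FreeGroup.of 3)⁻¹ * (FreeGroup.of 2)⁻¹)
      (by simp [hRB, brieskornRels])
    simp only [map_mul, map_inv] at h1
    rw [mul_inv_eq_one, mul_inv_eq_iff_eq_mul] at h1
    exact h1
  have hBx : (PresentedGroup.of (rels := RB) 0) ^ p = (PresentedGroup.of 3) ^ a := by
    have h1 := mk_rel (rels := RB) (w := FreeGroup.of 0 ^ p * ((FreeGroup.of 3) ^ a)⁻¹)
      (by simp [hRB, brieskornRels])
    simp only [map_mul, map_inv, map_pow, map_zpow] at h1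
    rw [mul_inv_eq_one] at h1
    exact h1
  have hBy : (PresentedGroup.of (rels := RB) 1) ^ q = (PresentedGroup.of 3) ^ b := by
    have h1 := mk_rel (rels := RB) (w := FreeGroup.of 1 ^ q * ((FreeGroup.of 3) ^ b)⁻¹)
      (by simp [hRB, brieskornRels])
    simp only [map_mul, map_inv, map_pow, map_zpow] at h1
    rw [mul_inv_eq_one] at h1
    exact h1
  have hBz : (PresentedGroup.of (rels := RB) 2) ^ r = (PresentedGroup.of 3) ^ c := by
    have h1 := mk_rel (rels := RB) (w := FreeGroup.of 2 ^ r * ((FreeGroup.of 3) ^ c)⁻¹)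
      (by simp [hRB, brieskornRels])
    simp only [map_mul, map_inv, map_pow, map_zpow] at h1
    rw [mul_inv_eq_one] at h1
    exact h1
  have hBxyz : (PresentedGroup.of (rels := RB) 0) * PresentedGroup.of 1 * PresentedGroup.of 2
      = 1 := by
    have h1 := mk_rel (rels := RB) (w := FreeGroup.of 0 * FreeGroup.of 1 * FreeGroup.of 2)
      (by simp [hRB, brieskornRels])
    simp only [map_mul] at h1
    exact h1
  -- group-level relations in the triangle group
  have hT0 : (PresentedGroup.of (rels := RT) 0) ^ (2 * p) = 1 := by
    have h1 := mk_rel (rels := RT) (w := FreeGroup.of 0 ^ (2 * p))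
      (by simp [hRT, triangleRels])
    simp only [map_pow] at h1
    exact h1
  have hT1 : (PresentedGroup.of (rels := RT) 1) ^ q = 1 := by
    have h1 := mk_rel (rels := RT) (w := FreeGroup.of 1 ^ q) (by simp [hRT, triangleRels])
    simp only [map_pow] at h1
    exact h1
  have hT2 : (PresentedGroup.of (rels := RT) 2) ^ r = 1 := by
    have h1 := mk_rel (rels := RT) (w := FreeGroup.of 2 ^ r) (by simp [hRT, triangleRels])
    simp only [map_pow] at h1
    exact h1
  have hTxyz : (PresentedGroup.of (rels := RT) 0) * PresentedGroup.of 1 * PresentedGroup.of 2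
      = 1 := by
    have h1 := mk_rel (rels := RT) (w := FreeGroup.of 0 * FreeGroup.of 1 * FreeGroup.of 2)
      (by simp [hRT, triangleRels])
    simp only [map_mul] at h1
    exact h1
  -- For an irreducible rep of the Brieskorn group, the image of the central generator is ±1
  have hsq : ∀ ρ : {ρ : PresentedGroup RB →* SL2C // IsIrreducibleRep ρ},
      ρ.1 (PresentedGroup.of 3) * ρ.1 (PresentedGroup.of 3) = 1 ∧
      ∃ e : ℂ, ((ρ.1 (PresentedGroup.of 3)) : Matrix (Fin 2) (Fin 2) ℂ) = e • 1 := by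
    intro ρ
    apply pm_one_facts
    apply schur ρ.1 ρ.2
    intro g
    have hg : g ∈ Subgroup.comap ρ.1 (Subgroup.centralizer {ρ.1 (PresentedGroup.of 3)}) := by
      apply PresentedGroup.generated_by
      intro j
      rw [Subgroup.mem_comap, Subgroup.mem_centralizer_iff]
      intro h hh
      rw [Set.mem_singleton_iff] at hh
      subst hh
      fin_cases j
      · rw [← map_mul, ← map_mul]; exact congrArg ρ.1 hB0
      · rw [← map_mul, ← map_mul]; exact congrArg ρ.1 hB1
      · rw [← map_mul, ← map_mul]; exact congrArg ρ.1 hB2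
      · rfl
    rw [Subgroup.mem_comap, Subgroup.mem_centralizer_iff] at hg
    exact hg _ rfl
  -- forward relation check
  have frel : ∀ ρ : {ρ : PresentedGroup RB →* SL2C // IsIrreducibleRep ρ},
      ∀ w ∈ RT, FreeGroup.lift
        ![ρ.1 (PresentedGroup.of 0), ρ.1 (PresentedGroup.of 1), ρ.1 (PresentedGroup.of 2)] w
        = 1 := by
    intro ρ w hw
    rw [hRT] at hw
    simp only [triangleRels, Set.mem_insert_iff, Set.mem_singleton_iff] at hw
    rcases hw with rfl | rfl | rfl | rfl
    · rw [map_pow, FreeGroup.lift_apply_of]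
      show (ρ.1 (PresentedGroup.of 0)) ^ (2 * p) = 1
      rw [pow_mul', ← map_pow, hBx, map_zpow, zpow_odd_eq (hsq ρ).1 haodd, pow_two]
      exact (hsq ρ).1
    · rw [map_pow, FreeGroup.lift_apply_of]
      show (ρ.1 (PresentedGroup.of 1)) ^ q = 1
      rw [← map_pow, hBy, map_zpow]
      exact zpow_even_eq_one (hsq ρ).1 hbeven
    · rw [map_pow, FreeGroup.lift_apply_of]
      show (ρ.1 (PresentedGroup.of 2)) ^ r = 1
      rw [← map_pow, hBz, map_zpow]
      exact zpow_even_eq_one (hsq ρ).1 hceven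
    · simp only [map_mul, FreeGroup.lift_apply_of]
      show ρ.1 (PresentedGroup.of 0) * ρ.1 (PresentedGroup.of 1) * ρ.1 (PresentedGroup.of 2) = 1
      rw [← map_mul, ← map_mul, hBxyz, map_one]
  -- forward irreducibility
  have Firr : ∀ ρ : {ρ : PresentedGroup RB →* SL2C // IsIrreducibleRep ρ},
      IsIrreducibleRep (PresentedGroup.toGroup (frel ρ)) := by
    intro ρ
    intro hcon
    obtain ⟨v, hv, hev⟩ := hcon
    apply ρ.2
    refine ⟨v, hv, eigen_all ρ.1 v hv (Set.range PresentedGroup.of)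
      (PresentedGroup.closure_range_of _) ?_⟩
    rintro g ⟨j, rfl⟩
    fin_cases j
    · obtain ⟨cc, hcc⟩ := hev (PresentedGroup.of 0)
      rw [PresentedGroup.toGroup.of] at hcc
      exact ⟨cc, hcc⟩
    · obtain ⟨cc, hcc⟩ := hev (PresentedGroup.of 1)
      rw [PresentedGroup.toGroup.of] at hcc
      exact ⟨cc, hcc⟩
    · obtain ⟨cc, hcc⟩ := hev (PresentedGroup.of 2)
      rw [PresentedGroup.toGroup.of] at hcc
      exact ⟨cc, hcc⟩
    · obtain ⟨e, he⟩ := (hsq ρ).2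
      refine ⟨e, ?_⟩
      show Matrix.mulVec ((ρ.1 (PresentedGroup.of 3)) : Matrix (Fin 2) (Fin 2) ℂ) v = e • v
      rw [he, Matrix.smul_mulVec, Matrix.one_mulVec]
  -- backward relation check
  have grel : ∀ σ : PresentedGroup RT →* SL2C, ∀ w ∈ RB,
      FreeGroup.lift
        ![σ (PresentedGroup.of 0), σ (PresentedGroup.of 1), σ (PresentedGroup.of 2),
          σ (PresentedGroup.of 0) ^ p] w = 1 := by
    intro σ w hw
    have hε2 : σ (PresentedGroup.of 0) ^ p * σ (PresentedGroup.of 0) ^ p = 1 := by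
      rw [← pow_add, ← two_mul, ← map_pow, hT0, map_one]
    have hscal := (pm_one_facts (sl2_sq_eq_one hε2)).2
    rw [hRB] at hw
    simp only [brieskornRels, Set.mem_insert_iff, Set.mem_singleton_iff] at hw
    rcases hw with rfl | rfl | rfl | rfl | rfl | rfl | rfl
    · simp only [map_mul, map_inv, FreeGroup.lift_apply_of]
      show σ (PresentedGroup.of 0) ^ p * σ (PresentedGroup.of 0) *
        (σ (PresentedGroup.of 0) ^ p)⁻¹ * (σ (PresentedGroup.of 0))⁻¹ = 1
      rw [commute_of_scalar hscal, mul_inv_cancel_right, mul_inv_cancel]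
    · simp only [map_mul, map_inv, FreeGroup.lift_apply_of]
      show σ (PresentedGroup.of 0) ^ p * σ (PresentedGroup.of 1) *
        (σ (PresentedGroup.of 0) ^ p)⁻¹ * (σ (PresentedGroup.of 1))⁻¹ = 1
      rw [commute_of_scalar hscal, mul_inv_cancel_right, mul_inv_cancel]
    · simp only [map_mul, map_inv, FreeGroup.lift_apply_of]
      show σ (PresentedGroup.of 0) ^ p * σ (PresentedGroup.of 2) *
        (σ (PresentedGroup.of 0) ^ p)⁻¹ * (σ (PresentedGroup.of 2))⁻¹ = 1
      rw [commute_of_scalar hscal, mul_inv_cancel_right, mul_inv_cancel]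
    · simp only [map_mul, map_inv, map_pow, map_zpow, FreeGroup.lift_apply_of]
      show σ (PresentedGroup.of 0) ^ p * ((σ (PresentedGroup.of 0) ^ p) ^ a)⁻¹ = 1
      rw [zpow_odd_eq hε2 haodd, mul_inv_cancel]
    · simp only [map_mul, map_inv, map_pow, map_zpow, FreeGroup.lift_apply_of]
      show σ (PresentedGroup.of 1) ^ q * ((σ (PresentedGroup.of 0) ^ p) ^ b)⁻¹ = 1
      rw [zpow_even_eq_one hε2 hbeven, inv_one, mul_one, ← map_pow, hT1, map_one]
    · simp only [map_mul, map_inv, map_pow, map_zpow, FreeGroup.lift_apply_of]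
      show σ (PresentedGroup.of 2) ^ r * ((σ (PresentedGroup.of 0) ^ p) ^ c)⁻¹ = 1
      rw [zpow_even_eq_one hε2 hceven, inv_one, mul_one, ← map_pow, hT2, map_one]
    · simp only [map_mul, FreeGroup.lift_apply_of]
      show σ (PresentedGroup.of 0) * σ (PresentedGroup.of 1) * σ (PresentedGroup.of 2) = 1
      rw [← map_mul, ← map_mul, hTxyz, map_one]
  -- backward irreducibility
  have Girr : ∀ σ : {σ : PresentedGroup RT →* SL2C // IsIrreducibleRep σ},
      IsIrreducibleRep (PresentedGroup.toGroup (grel σ.1)) := by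
    intro σ
    intro hcon
    obtain ⟨v, hv, hev⟩ := hcon
    apply σ.2
    refine ⟨v, hv, eigen_all σ.1 v hv (Set.range PresentedGroup.of)
      (PresentedGroup.closure_range_of _) ?_⟩
    rintro g ⟨j, rfl⟩
    fin_cases j
    · obtain ⟨cc, hcc⟩ := hev (PresentedGroup.of 0)
      rw [PresentedGroup.toGroup.of] at hcc
      exact ⟨cc, hcc⟩
    · obtain ⟨cc, hcc⟩ := hev (PresentedGroup.of 1)
      rw [PresentedGroup.toGroup.of] at hcc
      exact ⟨cc, hcc⟩
    · obtain ⟨cc, hcc⟩ := hev (PresentedGroup.of 2)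
      rw [PresentedGroup.toGroup.of] at hcc
      exact ⟨cc, hcc⟩
  -- round trips
  have GF : ∀ ρ : {ρ : PresentedGroup RB →* SL2C // IsIrreducibleRep ρ},
      PresentedGroup.toGroup (grel (PresentedGroup.toGroup (frel ρ))) = ρ.1 := by
    intro ρ
    refine PresentedGroup.ext fun x => ?_
    fin_cases x
    · simp only [PresentedGroup.toGroup.of]; rfl
    · simp only [PresentedGroup.toGroup.of]; rfl
    · simp only [PresentedGroup.toGroup.of]; rfl
    · simp only [PresentedGroup.toGroup.of]
      show (ρ.1 (PresentedGroup.of 0)) ^ p = ρ.1 (PresentedGroup.of 3)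
      rw [← map_pow, hBx, map_zpow]
      exact zpow_odd_eq (hsq ρ).1 haodd
  have FG : ∀ σ : {σ : PresentedGroup RT →* SL2C // IsIrreducibleRep σ},
      PresentedGroup.toGroup (frel ⟨PresentedGroup.toGroup (grel σ.1), Girr σ⟩) = σ.1 := by
    intro σ
    refine PresentedGroup.ext fun x => ?_
    fin_cases x
    · simp only [PresentedGroup.toGroup.of]; rfl
    · simp only [PresentedGroup.toGroup.of]; rfl
    · simp only [PresentedGroup.toGroup.of]; rfl
  -- conjugation preservation
  have hFc : ∀ ρ₁ ρ₂ : {ρ : PresentedGroup RB →* SL2C // IsIrreducibleRep ρ},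
      ConjRel ρ₁ ρ₂ →
      ConjRel (⟨PresentedGroup.toGroup (frel ρ₁), Firr ρ₁⟩ :
          {σ : PresentedGroup RT →* SL2C // IsIrreducibleRep σ})
        ⟨PresentedGroup.toGroup (frel ρ₂), Firr ρ₂⟩ := by
    rintro ρ₁ ρ₂ ⟨P, hP⟩
    refine ⟨P, ?_⟩
    have heq : PresentedGroup.toGroup (frel ρ₂)
        = (MulAut.conj P).toMonoidHom.comp (PresentedGroup.toGroup (frel ρ₁)) := by
      refine PresentedGroup.ext fun x => ?_
      simp only [MonoidHom.comp_apply, PresentedGroup.toGroup.of, MulEquiv.coe_toMonoidHom,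
        MulAut.conj_apply]
      fin_cases x
      · exact hP (PresentedGroup.of 0)
      · exact hP (PresentedGroup.of 1)
      · exact hP (PresentedGroup.of 2)
    intro g
    show PresentedGroup.toGroup (frel ρ₂) g = P * PresentedGroup.toGroup (frel ρ₁) g * P⁻¹
    rw [heq]
    simp [MulAut.conj_apply]
  have hGc : ∀ σ₁ σ₂ : {σ : PresentedGroup RT →* SL2C // IsIrreducibleRep σ},
      ConjRel σ₁ σ₂ →
      ConjRel (⟨PresentedGroup.toGroup (grel σ₁.1), Girr σ₁⟩ :
          {ρ : PresentedGroup RB →* SL2C // IsIrreducibleRep ρ})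
        ⟨PresentedGroup.toGroup (grel σ₂.1), Girr σ₂⟩ := by
    rintro σ₁ σ₂ ⟨P, hP⟩
    refine ⟨P, ?_⟩
    have heq : PresentedGroup.toGroup (grel σ₂.1)
        = (MulAut.conj P).toMonoidHom.comp (PresentedGroup.toGroup (grel σ₁.1)) := by
      refine PresentedGroup.ext fun x => ?_
      simp only [MonoidHom.comp_apply, PresentedGroup.toGroup.of, MulEquiv.coe_toMonoidHom,
        MulAut.conj_apply]
      fin_cases x
      · exact hP (PresentedGroup.of 0)
      · exact hP (PresentedGroup.of 1)
      · exact hP (PresentedGroup.of 2)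
      · show σ₂.1 (PresentedGroup.of 0) ^ p = P * σ₁.1 (PresentedGroup.of 0) ^ p * P⁻¹
        rw [hP (PresentedGroup.of 0)]
        have := map_pow (MulAut.conj P).toMonoidHom (σ₁.1 (PresentedGroup.of 0)) p
        simpa [MulAut.conj_apply] using this.symm
    intro g
    show PresentedGroup.toGroup (grel σ₂.1) g = P * PresentedGroup.toGroup (grel σ₁.1) g * P⁻¹
    rw [heq]
    simp [MulAut.conj_apply]
  -- assemble the equivalence
  refine ⟨{
    toFun := Quot.map (fun ρ => ⟨PresentedGroup.toGroup (frel ρ), Firr ρ⟩) hFc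
    invFun := Quot.map (fun σ => ⟨PresentedGroup.toGroup (grel σ.1), Girr σ⟩) hGc
    left_inv := ?_
    right_inv := ?_ }⟩
  · intro qq
    refine Quot.inductionOn qq fun ρ => ?_
    exact congrArg (Quot.mk _) (Subtype.ext (GF ρ))
  · intro qq
    refine Quot.inductionOn qq fun σ => ?_
    exact congrArg (Quot.mk _) (Subtype.ext (FG σ))
end

section
/- Let p, q, r be pairwise relatively prime positive integers with q and r odd, and let T(2p, q, r) be the triangle group with presentation ⟨x, y, z | x^{2p} = 1, y^q = 1, z^r = 1, xyz = 1⟩. Let λ, μ, ν ∈ ℂ satisfy λ^{2p} = 1 with λ ≠ 1 and λ ≠ −1, μ^q = 1 with μ ≠ 1, and ν^r = 1 with ν ≠ 1. Then there exists an irreducible representation ρ : T(2p,q,r) → SL₂(ℂ) with tr ρ(x) = λ + λ⁻¹, tr ρ(y) = μ + μ⁻¹, and tr ρ(xy) = ν + ν⁻¹. -/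
lemma sq_eq_fin_two (M : Matrix (Fin 2) (Fin 2) ℂ) (h : M.det = 1) :
    M * M = M.trace • M - 1 := by
  rw [Matrix.det_fin_two] at h
  ext i j
  fin_cases i <;> fin_cases j <;>
    simp [Matrix.mul_apply, Fin.sum_univ_two, Matrix.trace_fin_two, Matrix.one_apply] <;>
    first
      | linear_combination -h
      | ring

lemma pow_eq_one_of_trace (M : Matrix (Fin 2) (Fin 2) ℂ) (t : ℂ) (n : ℕ) (hn : 0 < n)
    (hdet : M.det = 1) (htr : M.trace = t + t⁻¹) (htn : t ^ n = 1)
    (ht1 : t ≠ 1) (ht2 : t ≠ -1) : M ^ n = 1 := by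
  have ht0 : t ≠ 0 := by
    intro h; rw [h, zero_pow hn.ne'] at htn; exact zero_ne_one htn
  set u := t⁻¹ with hu
  have htu : t * u = 1 := mul_inv_cancel₀ ht0
  have hs : t - u ≠ 0 := by
    intro h
    have hh : t = u := sub_eq_zero.mp h
    have h2 : (t - 1) * (t + 1) = 0 := by
      have h3 : t * t = 1 := by nth_rewrite 2 [hh]; exact htu
      linear_combination h3
    rcases mul_eq_zero.mp h2 with h4 | h4
    · exact ht1 (sub_eq_zero.mp h4)
    · exact ht2 (eq_neg_of_add_eq_zero_left h4)
  have hM2 : M * M = (t + u) • M - 1 := by rw [← htr]; exact sq_eq_fin_two M hdet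
  have claim : ∀ k : ℕ, (t - u) • M ^ (k + 1)
      = (t ^ (k + 1) - u ^ (k + 1)) • M - (t ^ k - u ^ k) • (1 : Matrix (Fin 2) (Fin 2) ℂ) := by
    intro k
    induction k with
    | zero => simp
    | succ k ih =>
      have hcoef : (t ^ (k + 1) - u ^ (k + 1)) * (t + u) - (t ^ k - u ^ k)
          = t ^ (k + 2) - u ^ (k + 2) := by linear_combination (t ^ k - u ^ k) * htu
      calc (t - u) • M ^ (k + 2) = ((t - u) • M ^ (k + 1)) * M := by
            rw [pow_succ, smul_mul_assoc]
        _ = ((t ^ (k + 1) - u ^ (k + 1)) • M - (t ^ k - u ^ k) • 1) * M := by rw [ih]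
        _ = (t ^ (k + 1) - u ^ (k + 1)) • (M * M) - (t ^ k - u ^ k) • M := by
            simp [sub_mul, smul_mul_assoc]
        _ = (t ^ (k + 2) - u ^ (k + 2)) • M - (t ^ (k + 1) - u ^ (k + 1)) • 1 := by
            rw [hM2, ← hcoef]; module
  obtain ⟨m, rfl⟩ : ∃ m, n = m + 1 := ⟨n - 1, (Nat.succ_pred_eq_of_pos hn).symm⟩
  have htm : t ^ m = u := by
    apply mul_left_cancel₀ ht0
    rw [htu, ← pow_succ', htn]
  have hum : u ^ m = t := by
    have hu0 : u ≠ 0 := inv_ne_zero ht0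
    apply mul_left_cancel₀ hu0
    rw [mul_comm u t, htu, ← pow_succ']
    rw [hu, inv_pow, htn, inv_one]
  have hfin := claim m
  rw [htn] at hfin
  have hun : u ^ (m + 1) = 1 := by rw [hu, inv_pow, htn, inv_one]
  rw [hun, htm, hum, sub_self, zero_smul] at hfin
  exact smul_right_injective _ hs (by show (t-u) • M^(m+1) = (t-u) • (1 : Matrix (Fin 2) (Fin 2) ℂ); rw [hfin]; module)

/-- Given roots of unity `lam` (a `2p`-th root, `≠ ±1`), `mu` (a `q`-th root, `≠ 1`),
and `nu` (an `r`-th root, `≠ 1`), there is an irreducible representation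
`ρ : T(2p,q,r) → SL₂(ℂ)` with `tr ρ(x) = lam + lam⁻¹`, `tr ρ(y) = mu + mu⁻¹`,
`tr ρ(xy) = nu + nu⁻¹`. -/
theorem triangle_irreducible_rep_exists
    (p q r : ℕ) (hp : 0 < p) (hq : 0 < q) (hr : 0 < r)
    (hqodd : Odd q) (hrodd : Odd r)
    (hpq : Nat.Coprime p q) (hpr : Nat.Coprime p r) (hqr : Nat.Coprime q r)
    (lam mu nu : ℂ)
    (hlam : lam ^ (2 * p) = 1) (hlam1 : lam ≠ 1) (hlam2 : lam ≠ -1)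
    (hmu : mu ^ q = 1) (hmu1 : mu ≠ 1)
    (hnu : nu ^ r = 1) (hnu1 : nu ≠ 1) :
    ∃ ρ : PresentedGroup (triangleRels (2 * p) q r) →* SL2C,
      IsIrreducibleRep ρ ∧
      Matrix.trace ((ρ (PresentedGroup.of 0) : Matrix (Fin 2) (Fin 2) ℂ)) = lam + lam⁻¹ ∧
      Matrix.trace ((ρ (PresentedGroup.of 1) : Matrix (Fin 2) (Fin 2) ℂ)) = mu + mu⁻¹ ∧
      Matrix.trace ((ρ (PresentedGroup.of 0 * PresentedGroup.of 1) :
        Matrix (Fin 2) (Fin 2) ℂ)) = nu + nu⁻¹ := by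
  have hp2 : 0 < 2 * p := by positivity
  have hlam0 : lam ≠ 0 := fun h => by
    rw [h, zero_pow hp2.ne'] at hlam; exact zero_ne_one hlam
  have hmu0 : mu ≠ 0 := fun h => by
    rw [h, zero_pow hq.ne'] at hmu; exact zero_ne_one hmu
  have hnu0 : nu ≠ 0 := fun h => by
    rw [h, zero_pow hr.ne'] at hnu; exact zero_ne_one hnu
  have hmu2 : mu ≠ -1 := fun h => by
    rw [h, hqodd.neg_one_pow] at hmu; norm_num at hmu
  have hnu2 : nu ≠ -1 := fun h => by
    rw [h, hrodd.neg_one_pow] at hnu; norm_num at hnu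
  set t : ℂ := nu + nu⁻¹ - lam * mu - lam⁻¹ * mu⁻¹ with ht
  set A : Matrix (Fin 2) (Fin 2) ℂ := !![lam, 1; 0, lam⁻¹] with hA
  set B : Matrix (Fin 2) (Fin 2) ℂ := !![mu, 0; t, mu⁻¹] with hB
  have hdetA : A.det = 1 := by rw [hA, Matrix.det_fin_two_of]; field_simp; simp
  have hdetB : B.det = 1 := by rw [hB, Matrix.det_fin_two_of]; field_simp; simp
  have htrA : A.trace = lam + lam⁻¹ := by rw [hA]; simp [Matrix.trace_fin_two]
  have htrB : B.trace = mu + mu⁻¹ := by rw [hB]; simp [Matrix.trace_fin_two]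
  have htrAB : (A * B).trace = nu + nu⁻¹ := by
    rw [hA, hB, ht]
    simp [Matrix.trace_fin_two, Matrix.mul_apply, Fin.sum_univ_two]
    ring
  set X : SL2C := ⟨A, hdetA⟩ with hX
  set Y : SL2C := ⟨B, hdetB⟩ with hY
  have hXpow : X ^ (2 * p) = 1 := by
    apply Subtype.ext
    rw [Matrix.SpecialLinearGroup.coe_pow]
    exact pow_eq_one_of_trace A lam (2 * p) hp2 hdetA htrA hlam hlam1 hlam2
  have hYpow : Y ^ q = 1 := by
    apply Subtype.ext
    rw [Matrix.SpecialLinearGroup.coe_pow]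
    exact pow_eq_one_of_trace B mu q hq hdetB htrB hmu hmu1 hmu2
  have hXYpow : (X * Y) ^ r = 1 := by
    apply Subtype.ext
    rw [Matrix.SpecialLinearGroup.coe_pow]
    exact pow_eq_one_of_trace _ nu r hr (X * Y).2
      (by rw [Matrix.SpecialLinearGroup.coe_mul]; exact htrAB) hnu hnu1 hnu2
  have hZpow : ((X * Y)⁻¹) ^ r = 1 := by rw [inv_pow, hXYpow, inv_one]
  set f : Fin 3 → SL2C := ![X, Y, (X * Y)⁻¹] with hf
  have hrels : ∀ w ∈ triangleRels (2 * p) q r, FreeGroup.lift f w = 1 := by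
    intro w hw
    simp only [triangleRels, Set.mem_insert_iff, Set.mem_singleton_iff] at hw
    rcases hw with h | h | h | h <;> subst h <;>
      simp only [map_pow, map_mul, FreeGroup.lift_apply_of, hf, Matrix.cons_val_zero,
        Matrix.cons_val_one, Matrix.head_cons, Matrix.cons_val_two, Matrix.tail_cons]
    · exact hXpow
    · exact hYpow
    · exact hZpow
    · exact mul_inv_cancel (X * Y)
  refine ⟨PresentedGroup.toGroup hrels, ?_, ?_, ?_, ?_⟩
  case refine_2 => rw [PresentedGroup.toGroup.of]; exact htrA
  case refine_3 => rw [PresentedGroup.toGroup.of]; exact htrB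
  case refine_4 =>
    rw [map_mul, PresentedGroup.toGroup.of, PresentedGroup.toGroup.of]
    show ((X * Y : SL2C) : Matrix (Fin 2) (Fin 2) ℂ).trace = nu + nu⁻¹
    rw [Matrix.SpecialLinearGroup.coe_mul]; exact htrAB
  -- irreducibility
  rintro ⟨v, hv0, hv⟩
  obtain ⟨c, hc⟩ := hv (PresentedGroup.of 0)
  obtain ⟨d, hd⟩ := hv (PresentedGroup.of 1)
  rw [PresentedGroup.toGroup.of] at hc hd
  have hc0 := congrFun hc 0
  have hc1 := congrFun hc 1
  have hd0 := congrFun hd 0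
  have hd1 := congrFun hd 1
  simp [hf, hX, hY, hA, hB, Matrix.mulVec, dotProduct, Fin.sum_univ_two]
    at hc0 hc1 hd0 hd1
  -- hc0 : lam * v 0 + v 1 = c * v 0
  -- hc1 : lam⁻¹ * v 1 = c * v 1
  -- hd0 : mu * v 0 = d * v 0
  -- hd1 : t * v 0 + mu⁻¹ * v 1 = d * v 1
  have hli : lam * lam⁻¹ = 1 := mul_inv_cancel₀ hlam0
  have hmuqr : mu ^ (q * r) = 1 := by rw [pow_mul, hmu, one_pow]
  have hnuqr : nu ^ (q * r) = 1 := by rw [mul_comm, pow_mul, hnu, one_pow]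
  have habs : lam ^ (q * r) = 1 → False := by
    intro h
    have h1 : orderOf lam ∣ Nat.gcd (2 * p) (q * r) :=
      Nat.dvd_gcd (orderOf_dvd_of_pow_eq_one hlam) (orderOf_dvd_of_pow_eq_one h)
    have hco : Nat.Coprime (2 * p) (q * r) := by
      have h2q : Nat.Coprime 2 q := Nat.coprime_two_left.mpr hqodd
      have h2r : Nat.Coprime 2 r := Nat.coprime_two_left.mpr hrodd
      exact Nat.Coprime.mul_right (Nat.Coprime.mul h2q hpq) (Nat.Coprime.mul h2r hpr)
    rw [hco] at h1
    exact hlam1 (orderOf_eq_one_iff.mp (Nat.dvd_one.mp h1))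
  have key : ∀ a b : ℂ, a ^ (q * r) = 1 → lam * a = b → b ^ (q * r) = 1 → False := by
    intro a b ha hab hb
    apply habs
    have h2 : lam ^ (q * r) * a ^ (q * r) = b ^ (q * r) := by rw [← mul_pow, hab]
    rw [ha, hb, mul_one] at h2
    exact h2
  by_cases hv1 : v 1 = 0
  · have hv00 : v 0 ≠ 0 := by
      intro h
      apply hv0
      funext i
      fin_cases i
      · exact h
      · exact hv1
    have ht0 : t = 0 := by
      rw [hv1, mul_zero, add_zero, mul_zero] at hd1
      exact (mul_eq_zero.mp hd1).resolve_right hv00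
    have hE : nu + nu⁻¹ - lam * mu - lam⁻¹ * mu⁻¹ = 0 := by rw [← ht]; exact ht0
    have hfac : (nu - lam * mu) * (nu * lam * mu - 1) = 0 := by
      have hid : (nu + nu⁻¹ - lam * mu - lam⁻¹ * mu⁻¹) * (nu * lam * mu)
          = (nu - lam * mu) * (nu * lam * mu - 1) := by field_simp; ring
      rw [← hid, hE, zero_mul]
    rcases mul_eq_zero.mp hfac with h | h
    · exact key mu nu hmuqr (by linear_combination -h) hnuqr
    · exact key (nu * mu) 1 (by rw [mul_pow, hnuqr, hmuqr, mul_one]) (by linear_combination h)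
        (one_pow _)
  · have hcval : c = lam⁻¹ := (hc1.resolve_right hv1).symm
    have hveq : v 1 = (lam⁻¹ - lam) * v 0 := by
      rw [hcval] at hc0; linear_combination hc0
    have hv00 : v 0 ≠ 0 := by
      intro h
      rw [h, mul_zero] at hveq
      exact hv1 hveq
    have hdval : d = mu := (hd0.resolve_right hv00).symm
    have hT2 : t = (mu - mu⁻¹) * (lam⁻¹ - lam) := by
      apply mul_right_cancel₀ hv00
      rw [hdval, hveq] at hd1
      linear_combination hd1
    have hE : nu + nu⁻¹ - lam⁻¹ * mu - lam * mu⁻¹ = 0 := by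
      rw [ht] at hT2; linear_combination hT2
    have hfac : (nu - lam⁻¹ * mu) * (nu * lam⁻¹ * mu - 1) = 0 := by
      have hid : (nu + nu⁻¹ - lam⁻¹ * mu - lam * mu⁻¹) * (nu * lam⁻¹ * mu)
          = (nu - lam⁻¹ * mu) * (nu * lam⁻¹ * mu - 1) := by field_simp; ring
      rw [← hid, hE, zero_mul]
    rcases mul_eq_zero.mp hfac with h | h
    · exact key nu mu hnuqr (by linear_combination lam * h + mu * hli) hmuqr
    · exact key 1 (nu * mu) (one_pow _)
        (by linear_combination -(lam * h) + nu * mu * hli)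
        (by rw [mul_pow, hnuqr, hmuqr, mul_one])
end

section
/- Let ξ ≥ 3 be an odd integer. Then no root of the quadratic polynomial (ξ+1)X² − 2ξX + (ξ+1) is a root of unity; that is, there is no complex number z with (ξ+1)z² − 2ξz + (ξ+1) = 0 and z^k = 1 for some positive integer k. -/
/-- For odd `ξ ≥ 3`, no root of `(ξ+1)X² - 2ξX + (ξ+1)` (twice the Alexander
polynomial of the twist knot `K_ξ`) is a root of unity. -/
theorem twist_knot_alexander_no_root_of_unity_odd (ξ : ℤ) (hξ : 3 ≤ ξ)
    (hodd : Odd ξ) :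
    ¬ ∃ z : ℂ, ((ξ : ℂ) + 1) * z ^ 2 - 2 * (ξ : ℂ) * z + ((ξ : ℂ) + 1) = 0 ∧
      ∃ k : ℕ, 0 < k ∧ z ^ k = 1 := by
  rintro ⟨z, hz, k, hk, hzk⟩
  have hz0 : z ≠ 0 := by
    intro h; rw [h, zero_pow hk.ne'] at hzk; exact zero_ne_one hzk
  have hξ1 : ((ξ : ℂ) + 1) ≠ 0 := by
    intro h
    have : (ξ : ℂ) = -1 := by linear_combination h
    have : ξ = -1 := by exact_mod_cast this
    omega
  -- z is integral over ℤ
  have hzint : IsIntegral ℤ z := by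
    refine ⟨Polynomial.X ^ k - Polynomial.C 1, ?_, ?_⟩
    · exact Polynomial.monic_X_pow_sub_C 1 hk.ne'
    · simp [Polynomial.eval₂, hzk]
  -- z⁻¹ = z^(k-1) is integral over ℤ
  have hzinv : z⁻¹ = z ^ (k - 1) := by
    field_simp
    rw [← pow_succ', Nat.sub_add_cancel hk, hzk]
  have hinvint : IsIntegral ℤ z⁻¹ := hzinv ▸ hzint.pow (k - 1)
  have hsum : IsIntegral ℤ (z + z⁻¹) := hzint.add hinvint
  -- z + z⁻¹ = 2ξ/(ξ+1)
  have heq : z + z⁻¹ = 2 * (ξ : ℂ) / ((ξ : ℂ) + 1) := by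
    field_simp
    linear_combination hz
  -- this is the image of the rational number q
  set q : ℚ := 2 * (ξ : ℚ) / ((ξ : ℚ) + 1) with hq
  have hmap : (algebraMap ℚ ℂ) q = z + z⁻¹ := by
    rw [heq, hq]
    push_cast
    simp [div_eq_div_iff, hξ1]
  have hqint : IsIntegral ℤ q := by
    rw [← isIntegral_algHom_iff (IsScalarTower.toAlgHom ℤ ℚ ℂ) (algebraMap ℚ ℂ).injective]
    show IsIntegral ℤ ((algebraMap ℚ ℂ) q)
    rw [hmap]; exact hsum
  obtain ⟨n, hn⟩ := IsIntegrallyClosed.isIntegral_iff.mp hqint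
  -- n = 2ξ/(ξ+1) gives (ξ+1) ∣ 2ξ
  have hξq : ((ξ : ℚ) + 1) ≠ 0 := by
    intro h
    have : (ξ : ℚ) = -1 := by linear_combination h
    have : ξ = -1 := by exact_mod_cast this
    omega
  have hnq : (n : ℚ) * ((ξ : ℚ) + 1) = 2 * (ξ : ℚ) := by
    have : (n : ℚ) = q := hn
    rw [hq] at this
    field_simp at this
    linarith [this]
  have hnz : n * (ξ + 1) = 2 * ξ := by exact_mod_cast hnq
  have hdvd : (ξ + 1) ∣ 2 := by
    have h1 : (ξ + 1) ∣ 2 * ξ := ⟨n, by linarith⟩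
    have h2 : (ξ + 1) ∣ 2 * (ξ + 1) := ⟨2, by ring⟩
    have := dvd_sub h2 h1
    simpa [mul_add] using this
  have := Int.le_of_dvd (by norm_num) hdvd
  omega
end
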